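/- arXiv:2405.03083 — 5 statements merged into one kernel-verified Lean document; each statement's English description precedes it below -/
import Mathlib

section
/- In the multi-treatment setting with true and estimated nuisances (see context), for every codebook C = (c_1, …, c_k) in ℝ^p it holds that E[φ_C(η)] = E[‖μ − Π_C(μ)‖₂²] = E[f_C(μ)]; that is, the uncentered influence function φ_C(η) is an unbiased estimate of the population clustering risk R(C) = E‖μ − Π_C(μ)‖₂². -/
open MeasureTheory

/-- View a coordinate function as a point of Euclidean space. -/
def toE {p : ℕ} (f : Fin p → ℝ) : EuclideanSpace ℝ (Fin p) := WithLp.toLp 2 f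

/-- The nearest-center index of `x` under the codebook `C`: the smallest `j`
minimizing `‖x − c_j‖₂`. -/
noncomputable def nearestIdx {p k : ℕ} (hk : 0 < k)
    (C : Fin k → EuclideanSpace ℝ (Fin p)) (x : EuclideanSpace ℝ (Fin p)) : Fin k :=
  (Finset.univ.filter fun j => ∀ m, ‖x - C j‖ ≤ ‖x - C m‖).min'
    (by
      obtain ⟨j, -, hj⟩ :=
        Finset.exists_min_image (Finset.univ : Finset (Fin k)) (fun j => ‖x - C j‖)
          ⟨⟨0, hk⟩, Finset.mem_univ _⟩
      exact ⟨j, Finset.mem_filter.2 ⟨Finset.mem_univ _, fun m => hj m (Finset.mem_univ m)⟩⟩)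

/-- The k-means criterion `f_C(x) = min_{1≤j≤k} ‖x − c_j‖₂²`. -/
noncomputable def fC {p k : ℕ} (C : Fin k → EuclideanSpace ℝ (Fin p))
    (x : EuclideanSpace ℝ (Fin p)) : ℝ :=
  ⨅ j, ‖x - C j‖ ^ 2

/-- The uncentered influence function
`φ_C(η) = Σ_a {φ_{2,a}(η) − 2φ_{1,a}(η)[Π_C(μ)]_a + [Π_C(μ)]_a²}`, where
`φ_{1,a}(η) = (𝟙{A=a}/π_a)(Y − μ_A) + μ_a`,
`φ_{2,a}(η) = 2μ_a(𝟙{A=a}/π_a)(Y − μ_A) + μ_a²`, and `Π_C(μ) = c_{d(μ;C)}`. -/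
noncomputable def phiC {Ω : Type*} {p k : ℕ} (hk : 0 < k)
    (A : Ω → Fin p) (Y : Ω → ℝ) (π μ : Fin p → Ω → ℝ)
    (C : Fin k → EuclideanSpace ℝ (Fin p)) (ω : Ω) : ℝ :=
  ∑ a, ((2 * μ a ω * ((if A ω = a then (1 : ℝ) else 0) / π a ω) * (Y ω - μ (A ω) ω)
          + μ a ω ^ 2)
    - 2 * (((if A ω = a then (1 : ℝ) else 0) / π a ω) * (Y ω - μ (A ω) ω) + μ a ω)
        * C (nearestIdx hk C (toE fun b => μ b ω)) a
    + C (nearestIdx hk C (toE fun b => μ b ω)) a ^ 2)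


lemma nearestIdx_min' {p k : ℕ} (hk : 0 < k) (C : Fin k → EuclideanSpace ℝ (Fin p))
    (x : EuclideanSpace ℝ (Fin p)) (m : Fin k) :
    ‖x - C (nearestIdx hk C x)‖ ≤ ‖x - C m‖ := by
  have h := Finset.min'_mem (Finset.univ.filter fun j => ∀ m, ‖x - C j‖ ≤ ‖x - C m‖)
    (by
      obtain ⟨j, -, hj⟩ :=
        Finset.exists_min_image (Finset.univ : Finset (Fin k)) (fun j => ‖x - C j‖)
          ⟨⟨0, hk⟩, Finset.mem_univ _⟩
      exact ⟨j, Finset.mem_filter.2 ⟨Finset.mem_univ _, fun m => hj m (Finset.mem_univ m)⟩⟩)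
  exact (Finset.mem_filter.1 h).2 m

lemma measurable_nearestIdx {p k : ℕ} (hk : 0 < k) (C : Fin k → EuclideanSpace ℝ (Fin p)) :
    Measurable (nearestIdx hk C) := by
  have hP : ∀ i : Fin k,
      MeasurableSet {x : EuclideanSpace ℝ (Fin p) | ∀ m, ‖x - C i‖ ≤ ‖x - C m‖} := by
    intro i
    have : {x : EuclideanSpace ℝ (Fin p) | ∀ m, ‖x - C i‖ ≤ ‖x - C m‖} =
        ⋂ m, {x | ‖x - C i‖ ≤ ‖x - C m‖} := by ext; simp
    rw [this]
    refine MeasurableSet.iInter fun m => measurableSet_le ?_ ?_ <;>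
      exact (continuous_id.sub continuous_const).norm.measurable
  apply measurable_to_countable'
  intro j
  have hset : nearestIdx hk C ⁻¹' {j} =
      {x : EuclideanSpace ℝ (Fin p) | ∀ m, ‖x - C j‖ ≤ ‖x - C m‖} ∩
        ⋂ i, ⋂ (_ : i < j), {x : EuclideanSpace ℝ (Fin p) | ∀ m, ‖x - C i‖ ≤ ‖x - C m‖}ᶜ := by
    ext x
    simp only [Set.mem_preimage, Set.mem_singleton_iff, Set.mem_inter_iff, Set.mem_setOf_eq,
      Set.mem_iInter, Set.mem_compl_iff]
    constructor
    · intro h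
      subst h
      constructor
      · have hmem := Finset.min'_mem (Finset.univ.filter fun j => ∀ m, ‖x - C j‖ ≤ ‖x - C m‖)
          (by
            obtain ⟨j, -, hj⟩ :=
              Finset.exists_min_image (Finset.univ : Finset (Fin k)) (fun j => ‖x - C j‖)
                ⟨⟨0, hk⟩, Finset.mem_univ _⟩
            exact ⟨j, Finset.mem_filter.2 ⟨Finset.mem_univ _, fun m => hj m (Finset.mem_univ m)⟩⟩)
        exact (Finset.mem_filter.1 hmem).2
      · intro i hi hcond
        have hle : nearestIdx hk C x ≤ i :=
          Finset.min'_le _ _ (Finset.mem_filter.2 ⟨Finset.mem_univ _, hcond⟩)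
        exact absurd hle (not_le.2 hi)
    · rintro ⟨hj, hlt⟩
      have h1 : nearestIdx hk C x ≤ j :=
        Finset.min'_le _ _ (Finset.mem_filter.2 ⟨Finset.mem_univ _, hj⟩)
      rcases lt_or_eq_of_le h1 with h | h
      · exfalso
        have hmem := Finset.min'_mem (Finset.univ.filter fun j => ∀ m, ‖x - C j‖ ≤ ‖x - C m‖)
          (by
            obtain ⟨j, -, hj⟩ :=
              Finset.exists_min_image (Finset.univ : Finset (Fin k)) (fun j => ‖x - C j‖)
                ⟨⟨0, hk⟩, Finset.mem_univ _⟩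
            exact ⟨j, Finset.mem_filter.2 ⟨Finset.mem_univ _, fun m => hj m (Finset.mem_univ m)⟩⟩)
        exact hlt _ h (Finset.mem_filter.1 hmem).2
      · exact h
  rw [hset]
  exact (hP j).inter (MeasurableSet.iInter fun i => MeasurableSet.iInter fun _ => (hP i).compl)

lemma norm_sq_sum {p : ℕ} (x y : EuclideanSpace ℝ (Fin p)) :
    ‖x - y‖ ^ 2 = ∑ a, (x a - y a) ^ 2 := by
  rw [EuclideanSpace.norm_eq, Real.sq_sqrt (Finset.sum_nonneg fun i _ => sq_nonneg _)]
  refine Finset.sum_congr rfl fun a _ => ?_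
  rw [PiLp.sub_apply, Real.norm_eq_abs, sq_abs]

lemma coord_le_norm {p : ℕ} (x : EuclideanSpace ℝ (Fin p)) (a : Fin p) : |x a| ≤ ‖x‖ := by
  rw [EuclideanSpace.norm_eq]
  calc |x a| = Real.sqrt (‖x a‖ ^ 2) := by
        rw [Real.sqrt_sq (norm_nonneg _), Real.norm_eq_abs]
    _ ≤ _ := Real.sqrt_le_sqrt
        (Finset.single_le_sum (fun i _ => sq_nonneg ‖x i‖) (Finset.mem_univ a))

lemma fC_eq {p k : ℕ} (hk : 0 < k) (C : Fin k → EuclideanSpace ℝ (Fin p))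
    (x : EuclideanSpace ℝ (Fin p)) :
    fC C x = ‖x - C (nearestIdx hk C x)‖ ^ 2 := by
  have : Nonempty (Fin k) := ⟨⟨0, hk⟩⟩
  refine le_antisymm (ciInf_le (Set.Finite.bddBelow (Set.finite_range _)) _) ?_
  exact le_ciInf fun j => pow_le_pow_left₀ (norm_nonneg _) (nearestIdx_min' hk C x j) 2

lemma aux_zero {Ω : Type*} {m0 : MeasurableSpace Ω} (P : Measure Ω) [IsProbabilityMeasure P]
    (𝔊 : MeasurableSpace Ω) (h𝔊 : 𝔊 ≤ m0) (g X : Ω → ℝ)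
    (hg : StronglyMeasurable[𝔊] g) (hgX : Integrable (fun ω => g ω * X ω) P)
    (hX : Integrable X P) (hX0 : P[X|𝔊] =ᵐ[P] 0) :
    ∫ ω, g ω * X ω ∂P = 0 := by
  haveI : SigmaFinite (P.trim h𝔊) := inferInstance
  have h1 : P[fun ω => g ω * X ω|𝔊] =ᵐ[P] fun ω => g ω * (P[X|𝔊]) ω :=
    condExp_mul_of_stronglyMeasurable_left hg hgX hX
  have h2 : (fun ω => g ω * (P[X|𝔊]) ω) =ᵐ[P] 0 := by
    filter_upwards [hX0] with ω hω
    simp [hω]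
  rw [← integral_condExp h𝔊 (f := fun ω => g ω * X ω), integral_congr_ae (h1.trans h2)]
  simp
/-- In the multi-treatment setting, for every codebook `C`,
`E[φ_C(η)] = E[‖μ − Π_C(μ)‖₂²] = E[f_C(μ)]`: the uncentered influence function `φ_C(η)` is
an unbiased estimate of the population clustering risk `R(C) = E‖μ − Π_C(μ)‖₂²`. -/
theorem stmt_7 {Ω : Type*} (𝔊 : MeasurableSpace Ω) {m0 : MeasurableSpace Ω} (P : Measure Ω) [IsProbabilityMeasure P]
    (h𝔊 : 𝔊 ≤ m0)
    (p k : ℕ) (hk : 0 < k) (B ε : ℝ) (hB : 0 < B) (hε : 0 < ε)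
    (A : Ω → Fin p) (hA : Measurable A)
    (Y : Ω → ℝ) (hYmeas : Measurable Y) (hY : ∀ᵐ ω ∂P, |Y ω| ≤ B)
    (π μ : Fin p → Ω → ℝ)
    (hπmeas : ∀ a, Measurable[𝔊] (π a))
    (hπ : ∀ a, π a =ᵐ[P] P[fun ω => if A ω = a then (1 : ℝ) else 0|𝔊])
    (hπε : ∀ a, ∀ᵐ ω ∂P, ε ≤ π a ω)
    (hμmeas : ∀ a, Measurable[𝔊] (μ a)) (hμB : ∀ a, ∀ᵐ ω ∂P, |μ a ω| ≤ B)
    (hπμ : ∀ a, (fun ω => π a ω * μ a ω)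
        =ᵐ[P] P[fun ω => Y ω * (if A ω = a then (1 : ℝ) else 0)|𝔊])
    (C : Fin k → EuclideanSpace ℝ (Fin p)) :
    ∫ ω, phiC hk A Y π μ C ω ∂P =
      ∫ ω, ‖toE (fun a => μ a ω) -
              C (nearestIdx hk C (toE fun a => μ a ω))‖ ^ 2 ∂P ∧
    ∫ ω, phiC hk A Y π μ C ω ∂P = ∫ ω, fC C (toE fun a => μ a ω) ∂P := by
  classical
  haveI : Nonempty (Fin k) := ⟨⟨0, hk⟩⟩
  haveI : SigmaFinite (P.trim h𝔊) := inferInstance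
  obtain ⟨j0, -, hj0⟩ := Finset.exists_max_image (Finset.univ : Finset (Fin k))
    (fun j => ‖C j‖) ⟨⟨0, hk⟩, Finset.mem_univ _⟩
  obtain ⟨M, hM0, hMle⟩ : ∃ M : ℝ, 0 ≤ M ∧ ∀ j, ‖C j‖ ≤ M :=
    ⟨‖C j0‖, norm_nonneg _, fun j => hj0 j (Finset.mem_univ j)⟩
  -- 𝔊-measurability of the projected center coordinates
  have hμE : Measurable[𝔊] (fun ω => (toE fun b => μ b ω)) :=
    (WithLp.measurable_toLp 2 _).comp (by letI := 𝔊; exact measurable_pi_lambda _ fun b => hμmeas b)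
  have hcG : ∀ a : Fin p,
      Measurable[𝔊] (fun ω => C (nearestIdx hk C (toE fun b => μ b ω)) a) := fun a =>
    (measurable_from_top (f := fun j : Fin k => C j a)).comp
      ((measurable_nearestIdx hk C).comp hμE)
  have hcB : ∀ (a : Fin p) (ω : Ω), |C (nearestIdx hk C (toE fun b => μ b ω)) a| ≤ M :=
    fun a ω => (coord_le_norm _ a).trans (hMle _)
  -- integrability helper
  have hint : ∀ (f : Ω → ℝ) (Mf : ℝ), AEStronglyMeasurable[m0] f P →
      (∀ᵐ ω ∂P, |f ω| ≤ Mf) → Integrable f P := fun f Mf hm hb =>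
    (integrable_const Mf).mono' hm (by simpa [Real.norm_eq_abs] using hb)
  -- measurability wrt m0
  have hA0 : Measurable[m0] A := hA
  have hY0 : Measurable[m0] Y := hYmeas
  have hμ0 : ∀ a, Measurable[m0] (μ a) := fun a => (hμmeas a).mono h𝔊 le_rfl
  have hπ0 : ∀ a, Measurable[m0] (π a) := fun a => (hπmeas a).mono h𝔊 le_rfl
  have hc0 : ∀ a : Fin p,
      Measurable[m0] (fun ω => C (nearestIdx hk C (toE fun b => μ b ω)) a) :=
    fun a => (hcG a).mono h𝔊 le_rfl
  have hind : ∀ a : Fin p, Measurable[m0] (fun ω => if A ω = a then (1 : ℝ) else 0) :=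
    fun a => Measurable.ite (hA0 (measurableSet_singleton a)) measurable_const measurable_const
  have hXm : ∀ a : Fin p,
      Measurable[m0] (fun ω => (if A ω = a then (1 : ℝ) else 0) * (Y ω - μ a ω)) :=
    fun a => (hind a).mul (hY0.sub (hμ0 a))
  have hgG : ∀ a : Fin p, Measurable[𝔊] (fun ω =>
      (2 * μ a ω - 2 * C (nearestIdx hk C (toE fun b => μ b ω)) a) / π a ω) := fun a =>
    ((measurable_const.mul (hμmeas a)).sub (measurable_const.mul (hcG a))).div (hπmeas a)
  have hgm : ∀ a : Fin p, Measurable[m0] (fun ω =>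
      (2 * μ a ω - 2 * C (nearestIdx hk C (toE fun b => μ b ω)) a) / π a ω) :=
    fun a => (hgG a).mono h𝔊 le_rfl
  -- bounds
  have hXb : ∀ a : Fin p, ∀ᵐ ω ∂P,
      |(if A ω = a then (1 : ℝ) else 0) * (Y ω - μ a ω)| ≤ 2 * B := by
    intro a
    filter_upwards [hY, hμB a] with ω h1 h2
    obtain ⟨h1a, h1b⟩ := abs_le.1 h1
    obtain ⟨h2a, h2b⟩ := abs_le.1 h2
    have hindb : |(if A ω = a then (1 : ℝ) else 0)| ≤ 1 := by split <;> simp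
    have hsub : |Y ω - μ a ω| ≤ 2 * B := abs_le.2 ⟨by linarith, by linarith⟩
    calc |(if A ω = a then (1 : ℝ) else 0) * (Y ω - μ a ω)|
        = |(if A ω = a then (1 : ℝ) else 0)| * |Y ω - μ a ω| := abs_mul _ _
      _ ≤ 1 * (2 * B) := mul_le_mul hindb hsub (abs_nonneg _) one_pos.le
      _ = 2 * B := one_mul _
  have hgb : ∀ a : Fin p, ∀ᵐ ω ∂P,
      |(2 * μ a ω - 2 * C (nearestIdx hk C (toE fun b => μ b ω)) a) / π a ω|
        ≤ (2 * B + 2 * M) / ε := by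
    intro a
    filter_upwards [hμB a, hπε a] with ω h1 h2
    rw [abs_div]
    obtain ⟨h1a, h1b⟩ := abs_le.1 h1
    obtain ⟨hca, hcb⟩ := abs_le.1 (hcB a ω)
    have hnum : |2 * μ a ω - 2 * C (nearestIdx hk C (toE fun b => μ b ω)) a|
        ≤ 2 * B + 2 * M := abs_le.2 ⟨by linarith, by linarith⟩
    have hden : ε ≤ |π a ω| := h2.trans (le_abs_self _)
    exact div_le_div₀ (by linarith) hnum hε hden
  -- integrability
  have hXint : ∀ a : Fin p,
      Integrable (fun ω => (if A ω = a then (1 : ℝ) else 0) * (Y ω - μ a ω)) P :=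
    fun a => hint _ (2 * B) (hXm a).aestronglyMeasurable (hXb a)
  have hgXint : ∀ a : Fin p, Integrable (fun ω =>
      ((2 * μ a ω - 2 * C (nearestIdx hk C (toE fun b => μ b ω)) a) / π a ω) *
        ((if A ω = a then (1 : ℝ) else 0) * (Y ω - μ a ω))) P := by
    intro a
    refine hint _ ((2 * B + 2 * M) / ε * (2 * B)) ((hgm a).mul (hXm a)).aestronglyMeasurable ?_
    filter_upwards [hgb a, hXb a] with ω h1 h2
    rw [abs_mul]
    exact mul_le_mul h1 h2 (abs_nonneg _) (div_nonneg (by linarith) hε.le)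
  have hnormeq : ∀ ω : Ω,
      ‖toE (fun a => μ a ω) - C (nearestIdx hk C (toE fun a => μ a ω))‖ ^ 2 =
        ∑ a, (μ a ω - C (nearestIdx hk C (toE fun b => μ b ω)) a) ^ 2 := fun ω =>
    norm_sq_sum (toE fun a => μ a ω) (C (nearestIdx hk C (toE fun a => μ a ω)))
  have hnormint : Integrable (fun ω =>
      ‖toE (fun a => μ a ω) - C (nearestIdx hk C (toE fun a => μ a ω))‖ ^ 2) P := by
    refine (integrable_finset_sum Finset.univ fun a _ => ?_).congr
      (Filter.Eventually.of_forall fun ω => (hnormeq ω).symm)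
    refine hint _ ((B + M) ^ 2) (((hμ0 a).sub (hc0 a)).pow_const 2).aestronglyMeasurable ?_
    filter_upwards [hμB a] with ω h1
    obtain ⟨h1a, h1b⟩ := abs_le.1 h1
    obtain ⟨hca, hcb⟩ := abs_le.1 (hcB a ω)
    have habs : |μ a ω - C (nearestIdx hk C (toE fun b => μ b ω)) a| ≤ B + M :=
      abs_le.2 ⟨by linarith, by linarith⟩
    calc |(μ a ω - C (nearestIdx hk C (toE fun b => μ b ω)) a) ^ 2|
        = |μ a ω - C (nearestIdx hk C (toE fun b => μ b ω)) a| ^ 2 := by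
          rw [abs_pow]
      _ ≤ (B + M) ^ 2 := pow_le_pow_left₀ (abs_nonneg _) habs 2
  -- pointwise decomposition of phiC
  have hphi : ∀ ω : Ω, phiC hk A Y π μ C ω =
      (∑ a, ((2 * μ a ω - 2 * C (nearestIdx hk C (toE fun b => μ b ω)) a) / π a ω) *
          ((if A ω = a then (1 : ℝ) else 0) * (Y ω - μ a ω)))
      + ‖toE (fun a => μ a ω) - C (nearestIdx hk C (toE fun a => μ a ω))‖ ^ 2 := by
    intro ω
    rw [hnormeq ω]
    unfold phiC
    rw [← Finset.sum_add_distrib]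
    refine Finset.sum_congr rfl fun a _ => ?_
    by_cases h : A ω = a
    · rw [if_pos h, h]; ring
    · rw [if_neg h, zero_div]; ring
  -- each stochastic term integrates to zero
  have hzero : ∀ a : Fin p, ∫ ω,
      ((2 * μ a ω - 2 * C (nearestIdx hk C (toE fun b => μ b ω)) a) / π a ω) *
        ((if A ω = a then (1 : ℝ) else 0) * (Y ω - μ a ω)) ∂P = 0 := by
    intro a
    refine aux_zero P 𝔊 h𝔊 _ _ (hgG a).stronglyMeasurable (hgXint a) (hXint a) ?_
    have hf1int : Integrable (fun ω => Y ω * (if A ω = a then (1 : ℝ) else 0)) P := by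
      refine hint _ B (hY0.mul (hind a)).aestronglyMeasurable ?_
      filter_upwards [hY] with ω h1
      rw [abs_mul]
      have : |(if A ω = a then (1 : ℝ) else 0)| ≤ 1 := by split <;> simp
      calc |Y ω| * |(if A ω = a then (1 : ℝ) else 0)| ≤ B * 1 :=
            mul_le_mul h1 this (abs_nonneg _) hB.le
        _ = B := mul_one _
    have hf2int : Integrable (fun ω => μ a ω * (if A ω = a then (1 : ℝ) else 0)) P := by
      refine hint _ B ((hμ0 a).mul (hind a)).aestronglyMeasurable ?_
      filter_upwards [hμB a] with ω h1
      rw [abs_mul]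
      have : |(if A ω = a then (1 : ℝ) else 0)| ≤ 1 := by split <;> simp
      calc |μ a ω| * |(if A ω = a then (1 : ℝ) else 0)| ≤ B * 1 :=
            mul_le_mul h1 this (abs_nonneg _) hB.le
        _ = B := mul_one _
    have hindint : Integrable (fun ω => if A ω = a then (1 : ℝ) else 0) P := by
      refine hint _ 1 (hind a).aestronglyMeasurable (Filter.Eventually.of_forall fun ω => ?_)
      split <;> simp
    have e1 : (fun ω => (if A ω = a then (1 : ℝ) else 0) * (Y ω - μ a ω)) =ᵐ[P]
        (fun ω => Y ω * (if A ω = a then (1 : ℝ) else 0)) -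
          (fun ω => μ a ω * (if A ω = a then (1 : ℝ) else 0)) :=
      Filter.Eventually.of_forall fun ω => by simp only [Pi.sub_apply]; ring
    have h2' : P[fun ω => μ a ω * (if A ω = a then (1 : ℝ) else 0)|𝔊] =ᵐ[P]
        fun ω => μ a ω * π a ω := by
      have hpull : P[fun ω => μ a ω * (if A ω = a then (1 : ℝ) else 0)|𝔊] =ᵐ[P]
          fun ω => μ a ω * (P[fun ω => if A ω = a then (1 : ℝ) else 0|𝔊]) ω :=
        condExp_mul_of_stronglyMeasurable_left (hμmeas a).stronglyMeasurable hf2int hindint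
      refine hpull.trans ?_
      filter_upwards [hπ a] with ω hω
      rw [← hω]
    calc P[fun ω => (if A ω = a then (1 : ℝ) else 0) * (Y ω - μ a ω)|𝔊]
        =ᵐ[P] P[(fun ω => Y ω * (if A ω = a then (1 : ℝ) else 0)) -
            (fun ω => μ a ω * (if A ω = a then (1 : ℝ) else 0))|𝔊] := condExp_congr_ae e1
      _ =ᵐ[P] P[fun ω => Y ω * (if A ω = a then (1 : ℝ) else 0)|𝔊] -
            P[fun ω => μ a ω * (if A ω = a then (1 : ℝ) else 0)|𝔊] :=
          condExp_sub hf1int hf2int 𝔊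
      _ =ᵐ[P] (fun ω => π a ω * μ a ω) - fun ω => μ a ω * π a ω :=
          Filter.EventuallyEq.sub (hπμ a).symm h2'
      _ =ᵐ[P] 0 := Filter.Eventually.of_forall fun ω => by
          simp only [Pi.sub_apply, Pi.zero_apply]; ring
  -- put it together
  have hmain : ∫ ω, phiC hk A Y π μ C ω ∂P =
      ∫ ω, ‖toE (fun a => μ a ω) - C (nearestIdx hk C (toE fun a => μ a ω))‖ ^ 2 ∂P := by
    rw [integral_congr_ae (Filter.Eventually.of_forall hphi),
      integral_add (integrable_finset_sum Finset.univ fun a _ => hgXint a) hnormint,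
      integral_finset_sum Finset.univ fun a _ => hgXint a,
      Finset.sum_eq_zero fun a _ => hzero a, zero_add]
  refine ⟨hmain, hmain.trans ?_⟩
  exact integral_congr_ae (Filter.Eventually.of_forall fun ω =>
    (fC_eq hk C (toE fun a => μ a ω)).symm)
end

section
/- In the binary nuisance setting (see context), assume additionally π ≥ ε almost surely. Then there exists a constant c depending only on B and ε such that ‖[(T/π̂)(Y − μ̂) + μ̂] − [(T/π)(Y − μ) + μ]‖_{L²(P)} ≤ c·(‖μ̂ − μ‖_{L²(P)} + ‖π̂ − π‖_{L²(P)}) and ‖[2μ̂(T/π̂)(Y − μ̂) + μ̂²] − [2μ(T/π)(Y − μ) + μ²]‖_{L²(P)} ≤ c·(‖μ̂ − μ‖_{L²(P)} + ‖π̂ − π‖_{L²(P)}). -/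
/-!
Pointwise, where `|T| ≤ 1`, `|Y|, |μ|, |μ̂| ≤ B` and `π, π̂ ≥ ε`, both scores are Lipschitz in
`(μ, π)`: the weight `1/π` is `1/ε²`-Lipschitz there, and the second score is `2μφ - μ²` for the
first score `φ`, which is bounded by `B(2/ε + 1)`. Minkowski's inequality turns a pointwise bound
`|f| ≤ C(|u| + |v|)` into `‖f‖₂ ≤ C(‖u‖₂ + ‖v‖₂)`.
-/

open MeasureTheory

/-- The `L²(P)` norm of a real random variable, `‖W‖_{L²(P)} = (E W²)^{1/2}`. -/
noncomputable def l2norm {Ω : Type*} {m : MeasurableSpace Ω} (P : Measure Ω) (f : Ω → ℝ) : ℝ :=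
  Real.sqrt (∫ ω, (f ω) ^ 2 ∂P)

lemma abs_inv_sub_inv_le {ε p q : ℝ} (hε : 0 < ε) (hp : ε ≤ p) (hq : ε ≤ q) :
    |q⁻¹ - p⁻¹| ≤ |q - p| / ε ^ 2 := by
  have hp0 : 0 < p := hε.trans_le hp
  have hq0 : 0 < q := hε.trans_le hq
  rw [inv_sub_inv hq0.ne' hp0.ne', abs_div, abs_sub_comm, abs_of_pos (mul_pos hq0 hp0)]
  gcongr
  nlinarith

lemma abs_div_le_inv {ε t p : ℝ} (hε : 0 < ε) (ht : |t| ≤ 1) (hp : ε ≤ p) : |t / p| ≤ ε⁻¹ := by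
  rw [abs_div, abs_of_pos (hε.trans_le hp), ← one_div]
  exact div_le_div₀ zero_le_one ht hε hp

lemma abs_two_mul_sub_sq_sub_le {B K n m a a' : ℝ} (hn : |n| ≤ B) (hm : |m| ≤ B) (ha : |a| ≤ K) :
    |(2 * n * a' - n ^ 2) - (2 * m * a - m ^ 2)| ≤ 2 * B * |a' - a| + 2 * (K + B) * |n - m| := by
  have hsum : |2 * a - n - m| ≤ 2 * (K + B) := by
    rw [abs_le] at *
    constructor <;> linarith
  calc |(2 * n * a' - n ^ 2) - (2 * m * a - m ^ 2)|
      = |2 * n * (a' - a) + (2 * a - n - m) * (n - m)| := by congr 1; ring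
    _ ≤ |2 * n| * |a' - a| + |2 * a - n - m| * |n - m| := by
      rw [← abs_mul, ← abs_mul]; exact abs_add_le _ _
    _ ≤ 2 * B * |a' - a| + 2 * (K + B) * |n - m| := by
      rw [abs_mul, abs_two]; gcongr

-- The augmented inverse-probability-weighted (doubly robust) score of `E[μ]`.
noncomputable def aipw (t y p m : ℝ) : ℝ := t / p * (y - m) + m

-- The corresponding score of `E[μ²]`.
noncomputable def aipwSq (t y p m : ℝ) : ℝ := 2 * m * (t / p) * (y - m) + m ^ 2

lemma aipwSq_eq_two_mul_aipw_sub_sq (t y p m : ℝ) :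
    aipwSq t y p m = 2 * m * aipw t y p m - m ^ 2 := by
  unfold aipwSq aipw; ring

section Pointwise

variable {B ε t y p q m n : ℝ}

lemma abs_aipw_le (hε : 0 < ε) (ht : |t| ≤ 1) (hp : ε ≤ p) (hy : |y| ≤ B) (hm : |m| ≤ B) :
    |aipw t y p m| ≤ B * (2 * ε⁻¹ + 1) := by
  have hym : |y - m| ≤ 2 * B := (abs_sub _ _).trans (by linarith)
  calc |aipw t y p m| ≤ |t / p| * |y - m| + |m| := (abs_add_le _ _).trans_eq (by rw [abs_mul])
    _ ≤ ε⁻¹ * (2 * B) + B := by gcongr; exact abs_div_le_inv hε ht hp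
    _ = B * (2 * ε⁻¹ + 1) := by ring

lemma abs_aipw_sub_le (hε : 0 < ε) (ht : |t| ≤ 1) (hp : ε ≤ p) (hq : ε ≤ q) (hy : |y| ≤ B)
    (hn : |n| ≤ B) :
    |aipw t y q n - aipw t y p m| ≤ (1 + ε⁻¹ + 2 * B / ε ^ 2) * (|n - m| + |q - p|) := by
  have hB : 0 ≤ B := (abs_nonneg n).trans hn
  have hyn : |y - n| ≤ 2 * B := (abs_sub _ _).trans (by linarith)
  have hweight : |1 - t / p| ≤ 1 + ε⁻¹ :=
    (abs_sub _ _).trans (by grw [abs_one, abs_div_le_inv hε ht hp])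
  calc |aipw t y q n - aipw t y p m|
      = |(1 - t / p) * (n - m) + t * (y - n) * (q⁻¹ - p⁻¹)| := by unfold aipw; congr 1; ring
    _ ≤ |1 - t / p| * |n - m| + |t| * |y - n| * |q⁻¹ - p⁻¹| := by
      rw [← abs_mul, ← abs_mul, ← abs_mul]; exact abs_add_le _ _
    _ ≤ (1 + ε⁻¹) * |n - m| + 1 * (2 * B) * (|q - p| / ε ^ 2) := by
      gcongr
      exact abs_inv_sub_inv_le hε hp hq
    _ ≤ (1 + ε⁻¹ + 2 * B / ε ^ 2) * (|n - m| + |q - p|) := by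
      have : 1 * (2 * B) * (|q - p| / ε ^ 2) = 2 * B / ε ^ 2 * |q - p| := by ring
      have : 0 ≤ 2 * B / ε ^ 2 * |n - m| + (1 + ε⁻¹) * |q - p| := by positivity
      linarith

lemma abs_aipwSq_sub_le (hε : 0 < ε) (ht : |t| ≤ 1) (hp : ε ≤ p) (hq : ε ≤ q) (hy : |y| ≤ B)
    (hm : |m| ≤ B) (hn : |n| ≤ B) :
    |aipwSq t y q n - aipwSq t y p m|
      ≤ 6 * B * (1 + ε⁻¹ + 2 * B / ε ^ 2) * (|n - m| + |q - p|) := by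
  have hB : 0 ≤ B := (abs_nonneg m).trans hm
  rw [aipwSq_eq_two_mul_aipw_sub_sq, aipwSq_eq_two_mul_aipw_sub_sq]
  refine (abs_two_mul_sub_sq_sub_le hn hm (abs_aipw_le hε ht hp hy hm)).trans ?_
  grw [abs_aipw_sub_le hε ht hp hq hy hn]
  have : 0 ≤ B * (2 * B / ε ^ 2 * |n - m|) + B * ((1 + ε⁻¹ + 2 * B / ε ^ 2) * |q - p|) := by
    positivity
  linarith

end Pointwise

section L2

variable {Ω : Type*} {m : MeasurableSpace Ω} {P : Measure Ω}

lemma l2norm_eq_toReal_eLpNorm {f : Ω → ℝ} (hf : MemLp f 2 P) :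
    l2norm P f = (eLpNorm f 2 P).toReal := by
  rw [hf.eLpNorm_eq_integral_rpow_norm two_ne_zero ENNReal.ofNat_ne_top,
    ENNReal.toReal_ofReal (by positivity), l2norm, Real.sqrt_eq_rpow]
  norm_num

lemma l2norm_le_mul_add_of_abs_le {f u v : Ω → ℝ} {C : ℝ} (hC : 0 ≤ C)
    (hf : AEStronglyMeasurable f P) (hu : MemLp u 2 P) (hv : MemLp v 2 P)
    (hfuv : ∀ᵐ ω ∂P, |f ω| ≤ C * (|u ω| + |v ω|)) :
    l2norm P f ≤ C * (l2norm P u + l2norm P v) := by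
  have hnorm : ∀ᵐ ω ∂P, ‖f ω‖ ≤ C * ‖|u ω| + |v ω|‖ := by
    filter_upwards [hfuv] with ω h
    rwa [Real.norm_eq_abs, Real.norm_of_nonneg (by positivity)]
  have hsum : eLpNorm (fun ω => |u ω| + |v ω|) 2 P ≤ eLpNorm u 2 P + eLpNorm v 2 P := by
    rw [← eLpNorm_norm u, ← eLpNorm_norm v]
    exact eLpNorm_add_le hu.1.norm hv.1.norm one_le_two
  have hfin : eLpNorm u 2 P + eLpNorm v 2 P ≠ ⊤ := ENNReal.add_ne_top.2 ⟨hu.2.ne, hv.2.ne⟩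
  have hf2 : MemLp f 2 P := ((hu.norm.add hv.norm).const_mul C).of_le hf (by
    filter_upwards [hnorm] with ω h
    simpa [abs_of_nonneg hC] using h)
  rw [l2norm_eq_toReal_eLpNorm hf2, l2norm_eq_toReal_eLpNorm hu, l2norm_eq_toReal_eLpNorm hv,
    ← ENNReal.toReal_add hu.2.ne hv.2.ne, ← ENNReal.toReal_ofReal hC, ← ENNReal.toReal_mul]
  exact ENNReal.toReal_mono (ENNReal.mul_ne_top ENNReal.ofReal_ne_top hfin)
    ((eLpNorm_le_mul_eLpNorm_of_ae_le_mul hnorm 2).trans (by gcongr))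

end L2

/-- There is a constant `c` depending only on `B` and `ε` such that, in the
binary nuisance setting with `π ≥ ε` a.s., the estimated uncentered influence functions for
`E[μ]` and `E[μ²]` are `L²(P)`-Lipschitz in the nuisances:
`‖[(T/π̂)(Y − μ̂) + μ̂] − [(T/π)(Y − μ) + μ]‖_{L²} ≤ c(‖μ̂ − μ‖_{L²} + ‖π̂ − π‖_{L²})` and
`‖[2μ̂(T/π̂)(Y − μ̂) + μ̂²] − [2μ(T/π)(Y − μ) + μ²]‖_{L²} ≤ c(‖μ̂ − μ‖_{L²} + ‖π̂ − π‖_{L²})`. -/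
theorem stmt_10 (B ε : ℝ) (hB : 0 < B) (hε : 0 < ε) :
    ∃ c : ℝ, 0 ≤ c ∧
      ∀ (Ω : Type) (m0 : MeasurableSpace Ω) (P : Measure Ω), IsProbabilityMeasure P →
      ∀ 𝔊 : MeasurableSpace Ω, 𝔊 ≤ m0 →
      ∀ T Y : Ω → ℝ, Measurable T → (∀ ω, T ω = 0 ∨ T ω = 1) →
      Measurable Y → (∀ᵐ ω ∂P, |Y ω| ≤ B) →
      ∀ π μ : Ω → ℝ,
      Measurable[𝔊] π → π =ᵐ[P] P[T|𝔊] → (∀ᵐ ω ∂P, ε ≤ π ω) →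
      Measurable[𝔊] μ → (∀ᵐ ω ∂P, |μ ω| ≤ B) →
      ((fun ω => π ω * μ ω) =ᵐ[P] P[fun ω => T ω * Y ω|𝔊]) →
      ∀ μh πh : Ω → ℝ, Measurable[𝔊] μh → Measurable[𝔊] πh →
      (∀ᵐ ω ∂P, |μh ω| ≤ B) → (∀ᵐ ω ∂P, ε ≤ πh ω ∧ πh ω ≤ 1) →
      l2norm P (fun ω =>
          ((T ω / πh ω) * (Y ω - μh ω) + μh ω) - ((T ω / π ω) * (Y ω - μ ω) + μ ω)) ≤
        c * (l2norm P (fun ω => μh ω - μ ω) + l2norm P (fun ω => πh ω - π ω)) ∧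
      l2norm P (fun ω =>
          (2 * μh ω * (T ω / πh ω) * (Y ω - μh ω) + μh ω ^ 2) -
            (2 * μ ω * (T ω / π ω) * (Y ω - μ ω) + μ ω ^ 2)) ≤
        c * (l2norm P (fun ω => μh ω - μ ω) + l2norm P (fun ω => πh ω - π ω)) := by
  refine ⟨(1 + 6 * B) * (1 + ε⁻¹ + 2 * B / ε ^ 2), by positivity, ?_⟩
  intro Ω m0 P hP 𝔊 h𝔊 T Y hT hT01 hY hYB π μ hπ hπT hπε hμ hμB _ μh πh hμh hπh hμhB hπhB
  -- `Measurable T` and `Measurable Y` were elaborated with the later instance `𝔊`.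
  replace hT := hT.mono h𝔊 le_rfl
  replace hY := hY.mono h𝔊 le_rfl
  replace hπ := hπ.mono h𝔊 le_rfl
  replace hμ := hμ.mono h𝔊 le_rfl
  replace hμh := hμh.mono h𝔊 le_rfl
  replace hπh := hπh.mono h𝔊 le_rfl
  have hT1 (ω : Ω) : |T ω| ≤ 1 := by rcases hT01 ω with h | h <;> simp [h]
  have hπL2 : MemLp π 2 P := by
    have hTL2 : MemLp T 2 P := MemLp.of_bound hT.aestronglyMeasurable 1 (ae_of_all _ hT1)
    exact (hTL2.condExp (m := 𝔊) one_le_two).ae_eq hπT.symm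
  have hΔμ : MemLp (fun ω => μh ω - μ ω) 2 P := by
    refine MemLp.of_bound (by fun_prop) (2 * B) ?_
    filter_upwards [hμB, hμhB] with ω hm hn
    exact (abs_sub _ _).trans (by linarith)
  have hΔπ : MemLp (fun ω => πh ω - π ω) 2 P := by
    refine (MemLp.of_bound hπh.aestronglyMeasurable 1 ?_).sub hπL2
    filter_upwards [hπhB] with ω hq
    exact abs_le.2 ⟨by linarith, hq.2⟩
  constructor
  · refine l2norm_le_mul_add_of_abs_le (by positivity)
      (Measurable.aestronglyMeasurable (by fun_prop)) hΔμ hΔπ ?_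
    filter_upwards [hYB, hπε, hμhB, hπhB] with ω hy hp hn hq
    exact (abs_aipw_sub_le hε (hT1 ω) hp hq.1 hy hn).trans
      (by gcongr; exact le_mul_of_one_le_left (by positivity) (by linarith))
  · refine l2norm_le_mul_add_of_abs_le (by positivity)
      (Measurable.aestronglyMeasurable (by fun_prop)) hΔμ hΔπ ?_
    filter_upwards [hYB, hπε, hμB, hμhB, hπhB] with ω hy hp hm hn hq
    exact (abs_aipwSq_sub_le hε (hT1 ω) hp hq.1 hy hm hn).trans (by gcongr; linarith)
end

section
/- In the margin condition setting (see context), define the indicator-form projection Π_{C*}(x) = Σ_{j=1}^k c*_j·𝟙{ζ_j(x) > 0}, which equals the nearest center of x when x has a unique nearest center. Then there exists a constant c, depending only on B, k, p, α, L and κ, such that for every coordinate a ∈ {1,…,p}: E|[Π_{C*}(μ̂)]_a − [Π_{C*}(μ)]_a| ≤ c·( max_{1≤j≤k} ‖𝟙{ζ_j(μ̂) > 0} − 𝟙{ζ_j(μ) > 0}‖_∞ · Σ_{a'=1}^p E|μ̂_{a'} − μ_{a'}| + Σ_{a'=1}^p ‖μ̂_{a'} − μ_{a'}‖_∞^α ).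 -/
open MeasureTheory

/-- `ζ_j(x) = min_{i≠j} ‖x − c*_i‖₂ − ‖x − c*_j‖₂`. -/
noncomputable def zeta {p k : ℕ} (Cs : Fin k → EuclideanSpace ℝ (Fin p)) (j : Fin k)
    (x : EuclideanSpace ℝ (Fin p)) : ℝ :=
  (⨅ i : {i : Fin k // i ≠ j}, ‖x - Cs i.1‖) - ‖x - Cs j‖

/-- The margin neighborhood `N_{C*}(t) = ⋃_j {x ∈ V_j(C*) : |ζ_j(x)| ≤ t}` of the Voronoi
boundary of the codebook `C*`. -/
def marginSet {p k : ℕ} (Cs : Fin k → EuclideanSpace ℝ (Fin p)) (t : ℝ) :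
    Set (EuclideanSpace ℝ (Fin p)) :=
  {x | ∃ j, (∀ i, ‖x - Cs j‖ ≤ ‖x - Cs i‖) ∧ |zeta Cs j x| ≤ t}

/-- The essential supremum norm `‖f‖_∞` of a real random variable. -/
noncomputable def linf {Ω : Type*} {m : MeasurableSpace Ω} (P : Measure Ω) (f : Ω → ℝ) : ℝ :=
  essSup (fun ω => |f ω|) P

/-!
The bound already holds with the second term alone. The two projections differ only where some
indicator `𝟙{ζ_j > 0}` flips between `μ` and `μ̂`, and there the coordinate difference is at most
`k B`. Each `ζ_j` is 2-Lipschitz and at most one `ζ_j` is positive at any point, so a flip forces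
`μ` into the margin neighbourhood `N_{C*}(2D)`, where `D = Σ_a ‖μ̂_a − μ_a‖_∞ ≥ ‖μ̂ − μ‖` a.s.
The margin condition, or the trivial bound `1 ≤ (2D / κ)^α` when `2D > κ`, gives
`P(flip) ≲ D^α ≲ Σ_a ‖μ̂_a − μ_a‖_∞^α`.
-/

open Finset

namespace Voronoi

variable {p k : ℕ} (Cs : Fin k → EuclideanSpace ℝ (Fin p))

lemma bddBelow_range_norm_sub (j : Fin k) (x : EuclideanSpace ℝ (Fin p)) :
    BddBelow (Set.range fun i : {i : Fin k // i ≠ j} => ‖x - Cs i.1‖) :=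
  ⟨0, by rintro _ ⟨i, rfl⟩; positivity⟩

lemma iInf_norm_sub_le_norm_sub {i j : Fin k} (hij : i ≠ j) (x : EuclideanSpace ℝ (Fin p)) :
    ⨅ l : {l : Fin k // l ≠ j}, ‖x - Cs l.1‖ ≤ ‖x - Cs i‖ :=
  ciInf_le (bddBelow_range_norm_sub Cs j x) ⟨i, hij⟩

lemma zeta_le_add_dist (j : Fin k) (x y : EuclideanSpace ℝ (Fin p)) :
    zeta Cs j x ≤ zeta Cs j y + 2 * dist x y := by
  have hinf : ⨅ i : {i : Fin k // i ≠ j}, ‖x - Cs i.1‖ ≤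
      (⨅ i : {i : Fin k // i ≠ j}, ‖y - Cs i.1‖) + dist x y := by
    rcases isEmpty_or_nonempty {i : Fin k // i ≠ j} with h | h
    · simp only [Real.iInf_of_isEmpty, zero_add, dist_nonneg]
    · rw [← sub_le_iff_le_add]
      refine le_ciInf fun i => sub_le_iff_le_add.2 ?_
      calc ⨅ i : {i : Fin k // i ≠ j}, ‖x - Cs i.1‖ ≤ ‖x - Cs i.1‖ :=
            ciInf_le (bddBelow_range_norm_sub Cs j x) i
        _ ≤ ‖y - Cs i.1‖ + dist x y := by
            rw [dist_eq_norm]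
            simpa [sub_sub_sub_cancel_right, add_comm] using
              norm_sub_norm_le (x - Cs i.1) (y - Cs i.1)
  have hj : ‖y - Cs j‖ ≤ ‖x - Cs j‖ + dist x y := by
    rw [dist_comm, dist_eq_norm]
    simpa [sub_sub_sub_cancel_right, add_comm] using norm_sub_norm_le (y - Cs j) (x - Cs j)
  unfold zeta
  linarith

lemma exists_ne_of_zeta_pos {j : Fin k} {x : EuclideanSpace ℝ (Fin p)} (h : 0 < zeta Cs j x) :
    ∃ i, i ≠ j := by
  by_contra! hall
  have : IsEmpty {i : Fin k // i ≠ j} := ⟨fun i => i.2 (hall i.1)⟩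
  simp only [zeta, Real.iInf_of_isEmpty, zero_sub, Left.neg_pos_iff] at h
  linarith [norm_nonneg (x - Cs j)]

lemma zeta_add_zeta_nonpos {i j : Fin k} (hij : i ≠ j) (x : EuclideanSpace ℝ (Fin p)) :
    zeta Cs i x + zeta Cs j x ≤ 0 := by
  have h₁ := iInf_norm_sub_le_norm_sub Cs hij x
  have h₂ := iInf_norm_sub_le_norm_sub Cs hij.symm x
  unfold zeta
  linarith

lemma zeta_pos_iff {i j : Fin k} {x : EuclideanSpace ℝ (Fin p)} (h : 0 < zeta Cs j x) :
    0 < zeta Cs i x ↔ i = j := by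
  refine ⟨fun hi => ?_, fun hij => hij ▸ h⟩
  by_contra hij
  linarith [zeta_add_zeta_nonpos Cs hij x]

lemma zeta_nonneg_of_forall_norm_le {i j : Fin k} (hij : i ≠ j) {x : EuclideanSpace ℝ (Fin p)}
    (hx : ∀ l, ‖x - Cs j‖ ≤ ‖x - Cs l‖) : 0 ≤ zeta Cs j x := by
  have : Nonempty {l : Fin k // l ≠ j} := ⟨⟨i, hij⟩⟩
  exact sub_nonneg.2 (le_ciInf fun l => hx l.1)

lemma mem_marginSet_of_not_iff {x y : EuclideanSpace ℝ (Fin p)} {d : ℝ} (hxy : dist x y ≤ d)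
    {j : Fin k} (hflip : ¬ (0 < zeta Cs j y ↔ 0 < zeta Cs j x)) :
    x ∈ marginSet Cs (2 * d) := by
  obtain ⟨i, hij⟩ : ∃ i, i ≠ j := by
    by_cases hy : 0 < zeta Cs j y
    · exact exists_ne_of_zeta_pos Cs hy
    · exact exists_ne_of_zeta_pos Cs (x := x) (by tauto)
  have : Nonempty (Fin k) := ⟨j⟩
  obtain ⟨j', hj'⟩ := Finite.exists_min fun l => ‖x - Cs l‖
  obtain ⟨i', hij'⟩ : ∃ i', i' ≠ j' := by
    rcases eq_or_ne j j' with rfl | h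
    · exact ⟨i, hij⟩
    · exact ⟨j, h⟩
  have hnonneg := zeta_nonneg_of_forall_norm_le Cs hij' hj'
  refine ⟨j', hj', abs_le.2 ⟨by linarith [dist_nonneg.trans hxy], ?_⟩⟩
  by_contra! hlarge
  have hx : 0 < zeta Cs j' x := by linarith [dist_nonneg.trans hxy]
  have hy : 0 < zeta Cs j' y := by linarith [zeta_le_add_dist Cs j' x y]
  exact hflip (by rw [zeta_pos_iff Cs hx, zeta_pos_iff Cs hy])

end Voronoi

lemma EuclideanSpace.dist_le_sum_dist {ι : Type*} [Fintype ι] (x y : EuclideanSpace ℝ ι) :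
    dist x y ≤ ∑ i, dist (x i) (y i) := by
  rw [EuclideanSpace.dist_eq, Real.sqrt_le_left (sum_nonneg fun i _ => dist_nonneg)]
  exact sum_sq_le_sq_sum_of_nonneg fun i _ => dist_nonneg

lemma Real.rpow_sum_le_card_rpow_mul_sum {ι : Type*} [Fintype ι] {g : ι → ℝ} (hg : ∀ i, 0 ≤ g i)
    {α : ℝ} (hα : 0 < α) :
    (∑ i, g i) ^ α ≤ (Fintype.card ι : ℝ) ^ α * ∑ i, g i ^ α := by
  cases isEmpty_or_nonempty ι
  · simp [Real.zero_rpow hα.ne']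
  obtain ⟨i₀, hi₀⟩ := Finite.exists_max g
  calc (∑ i, g i) ^ α ≤ (Fintype.card ι * g i₀) ^ α := by
        gcongr
        · exact sum_nonneg fun i _ => hg i
        · simpa using sum_le_card_nsmul univ g (g i₀) fun i _ => hi₀ i
    _ = (Fintype.card ι : ℝ) ^ α * g i₀ ^ α := Real.mul_rpow (by positivity) (hg i₀)
    _ ≤ (Fintype.card ι : ℝ) ^ α * ∑ i, g i ^ α := by
        gcongr
        exact single_le_sum (fun i _ => Real.rpow_nonneg (hg i) α) (mem_univ i₀)

lemma abs_sum_ite_mul_sub_sum_ite_mul_le {ι : Type*} [Fintype ι] {P Q : ι → Prop}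
    [DecidablePred P] [DecidablePred Q] {c : ι → ℝ} {B : ℝ} (hc : ∀ i, |c i| ≤ B) :
    |(∑ i, (if P i then (1 : ℝ) else 0) * c i) - ∑ i, (if Q i then (1 : ℝ) else 0) * c i| ≤
      Fintype.card ι * B := by
  rw [← sum_sub_distrib]
  calc _ ≤ ∑ i, |(if P i then (1 : ℝ) else 0) * c i - (if Q i then (1 : ℝ) else 0) * c i| :=
        abs_sum_le_sum_abs _ _
    _ ≤ ∑ _i : ι, B := sum_le_sum fun i _ => by
        split_ifs <;> simp [hc i, (abs_nonneg (c i)).trans (hc i)]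
    _ = Fintype.card ι * B := by simp

namespace MeasureTheory

variable {Ω : Type*} {m : MeasurableSpace Ω} {P : Measure Ω}

lemma linf_nonneg [NeZero P] (f : Ω → ℝ) : 0 ≤ linf P f := by
  rw [linf, essSup, Filter.limsup_eq]
  refine Real.sInf_nonneg fun b hb => ?_
  obtain ⟨ω, hω⟩ := Filter.Eventually.exists (f := ae P) hb
  exact (abs_nonneg (f ω)).trans hω

lemma ae_abs_le_linf {f : Ω → ℝ} {C : ℝ} (hf : ∀ᵐ ω ∂P, |f ω| ≤ C) :
    ∀ᵐ ω ∂P, |f ω| ≤ linf P f :=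
  ae_le_essSup ⟨C, hf⟩

lemma integral_le_mul_measureReal [IsFiniteMeasure P] {f : Ω → ℝ} {C : ℝ} {s : Set Ω}
    (hf₀ : 0 ≤ f) (hfC : ∀ ω, f ω ≤ C) (hfs : ∀ ω ∉ s, f ω = 0) :
    ∫ ω, f ω ∂P ≤ C * P.real s := by
  have hle : f ≤ (toMeasurable P s).indicator fun _ => C := fun ω => by
    by_cases hω : ω ∈ toMeasurable P s
    · simpa [hω] using hfC ω
    · simp [hω, hfs ω fun h => hω (subset_toMeasurable P s h)]
  calc ∫ ω, f ω ∂P ≤ ∫ ω, (toMeasurable P s).indicator (fun _ => C) ω ∂P :=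
        integral_mono_of_nonneg (.of_forall hf₀)
          ((integrable_const C).indicator (measurableSet_toMeasurable P s)) (.of_forall hle)
    _ = C * P.real s := by
        rw [integral_indicator_const _ (measurableSet_toMeasurable P s), smul_eq_mul, mul_comm,
          measureReal_def, measure_toMeasurable, ← measureReal_def]

lemma measureReal_le_of_margin [IsProbabilityMeasure P] {s : Set Ω} {L κ α t : ℝ} (hL : 0 ≤ L)
    (hκ : 0 < κ) (hα : 0 ≤ α) (ht : 0 ≤ t) (hs : t ≤ κ → P s ≤ ENNReal.ofReal (L * t ^ α)) :
    P.real s ≤ (L + (κ ^ α)⁻¹) * t ^ α := by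
  have hκα : 0 < κ ^ α := Real.rpow_pos_of_pos hκ α
  rcases le_or_gt t κ with htκ | htκ
  · calc P.real s ≤ L * t ^ α := ENNReal.toReal_le_of_le_ofReal (by positivity) (hs htκ)
      _ ≤ (L + (κ ^ α)⁻¹) * t ^ α := by gcongr; linarith [inv_pos.2 hκα]
  · calc P.real s ≤ 1 := measureReal_le_one
      _ ≤ (κ ^ α)⁻¹ * t ^ α := by
          rw [inv_mul_eq_div, one_le_div hκα]
          exact Real.rpow_le_rpow hκ.le htκ.le hα
      _ ≤ (L + (κ ^ α)⁻¹) * t ^ α := by gcongr; linarith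

lemma ae_dist_le_sum_linf {ι : Type*} [Fintype ι] {X Y : Ω → EuclideanSpace ℝ ι} {B : ℝ}
    (hX : ∀ i, ∀ᵐ ω ∂P, |X ω i| ≤ B) (hY : ∀ i, ∀ᵐ ω ∂P, |Y ω i| ≤ B) :
    ∀ᵐ ω ∂P, dist (X ω) (Y ω) ≤ ∑ i, linf P fun ω => Y ω i - X ω i := by
  have hcoord : ∀ i, ∀ᵐ ω ∂P, |Y ω i - X ω i| ≤ linf P fun ω => Y ω i - X ω i :=
    fun i => ae_abs_le_linf (C := 2 * B) <| by
      filter_upwards [hX i, hY i] with ω hXω hYω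
      linarith [abs_sub (Y ω i) (X ω i)]
  filter_upwards [ae_all_iff.2 hcoord] with ω hω
  refine (EuclideanSpace.dist_le_sum_dist _ _).trans (sum_le_sum fun i _ => ?_)
  simpa [Real.dist_eq, abs_sub_comm] using hω i

lemma integral_abs_sum_ite_mul_sub_le [IsFiniteMeasure P] {ι : Type*} [Fintype ι]
    {A A' : Ω → ι → Prop} [∀ ω i, Decidable (A ω i)] [∀ ω i, Decidable (A' ω i)]
    {c : ι → ℝ} {B : ℝ} (hc : ∀ i, |c i| ≤ B) :
    ∫ ω, |(∑ i, (if A ω i then (1 : ℝ) else 0) * c i) -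
        ∑ i, (if A' ω i then (1 : ℝ) else 0) * c i| ∂P ≤
      Fintype.card ι * B * P.real {ω | ∃ i, ¬ (A ω i ↔ A' ω i)} := by
  refine integral_le_mul_measureReal (fun ω => abs_nonneg _)
    (fun ω => abs_sum_ite_mul_sub_sum_ite_mul_le hc) fun ω hω => ?_
  have hiff : ∀ i, A ω i ↔ A' ω i := fun i => not_not.1 fun h => hω ⟨i, h⟩
  simp_rw [hiff, sub_self, abs_zero]

end MeasureTheory

open Voronoi in
theorem stmt_11_general (B : ℝ) (hB : 0 < B) (k p : ℕ) (α L κ : ℝ)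
    (hα : 0 < α) (hL : 0 < L) (hκ : 0 < κ) :
    ∃ c : ℝ, 0 ≤ c ∧
      ∀ (Ω : Type) (m0 : MeasurableSpace Ω) (P : Measure Ω), IsProbabilityMeasure P →
      ∀ μv μh : Ω → EuclideanSpace ℝ (Fin p),
        (∀ a, Measurable fun ω => μv ω a) → (∀ a, Measurable fun ω => μh ω a) →
        (∀ a, ∀ᵐ ω ∂P, |μv ω a| ≤ B) → (∀ a, ∀ᵐ ω ∂P, |μh ω a| ≤ B) →
      ∀ Cs : Fin k → EuclideanSpace ℝ (Fin p), (∀ j a, |Cs j a| ≤ B) →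
      (∀ t : ℝ, 0 ≤ t → t ≤ κ →
        P {ω | μv ω ∈ marginSet Cs t} ≤ ENNReal.ofReal (L * t ^ α)) →
      ∀ a : Fin p,
        ∫ ω, |(∑ j, (if 0 < zeta Cs j (μh ω) then (1 : ℝ) else 0) * Cs j a) -
              (∑ j, (if 0 < zeta Cs j (μv ω) then (1 : ℝ) else 0) * Cs j a)| ∂P ≤
          c * ((⨆ j, linf P fun ω =>
                  (if 0 < zeta Cs j (μh ω) then (1 : ℝ) else 0) -
                    (if 0 < zeta Cs j (μv ω) then (1 : ℝ) else 0)) *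
                (∑ a' : Fin p, ∫ ω, |μh ω a' - μv ω a'| ∂P) +
              ∑ a' : Fin p, (linf P fun ω => μh ω a' - μv ω a') ^ α) := by
  refine ⟨k * B * ((L + (κ ^ α)⁻¹) * (2 * p) ^ α), by positivity, ?_⟩
  intro Ω _ P _ μv μh _ _ hμv hμh Cs hCs hmargin a
  set D := ∑ a', linf P fun ω => μh ω a' - μv ω a'
  set T := ∑ a', (linf P fun ω => μh ω a' - μv ω a') ^ α
  set E := {ω | ∃ j, ¬ (0 < zeta Cs j (μh ω) ↔ 0 < zeta Cs j (μv ω))}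
  have hD : 0 ≤ D := sum_nonneg fun a' _ => linf_nonneg _
  have hPE : P.real E ≤ (L + (κ ^ α)⁻¹) * (2 * D) ^ α := by
    refine measureReal_le_of_margin hL.le hκ hα.le (by positivity) fun h2D => ?_
    refine (measure_mono_ae ?_).trans (hmargin _ (by positivity) h2D)
    filter_upwards [ae_dist_le_sum_linf hμv hμh] with ω hω ⟨j, hj⟩
    exact mem_marginSet_of_not_iff Cs hω hj
  have hDT : (2 * D) ^ α ≤ (2 * p) ^ α * T := by
    rw [Real.mul_rpow zero_le_two hD, Real.mul_rpow zero_le_two p.cast_nonneg, mul_assoc]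
    gcongr
    simpa using
      Real.rpow_sum_le_card_rpow_mul_sum (ι := Fin p) (fun a' => linf_nonneg (P := P) _) hα
  have hMS : 0 ≤ (⨆ j, linf P fun ω =>
      (if 0 < zeta Cs j (μh ω) then (1 : ℝ) else 0) -
        (if 0 < zeta Cs j (μv ω) then (1 : ℝ) else 0)) *
      ∑ a' : Fin p, ∫ ω, |μh ω a' - μv ω a'| ∂P :=
    mul_nonneg (Real.iSup_nonneg fun j => linf_nonneg _)
      (sum_nonneg fun a' _ => integral_nonneg fun ω => abs_nonneg _)
  calc _ ≤ k * B * P.real E := by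
        simpa using integral_abs_sum_ite_mul_sub_le (P := P) fun j => hCs j a
    _ ≤ k * B * ((L + (κ ^ α)⁻¹) * (2 * p) ^ α * T) := by
        gcongr
        exact hPE.trans (by rw [mul_assoc]; gcongr)
    _ = k * B * ((L + (κ ^ α)⁻¹) * (2 * p) ^ α) * T := by ring
    _ ≤ _ := mul_le_mul_of_nonneg_left (le_add_of_nonneg_left hMS) (by positivity)

/-- Under the margin condition with radius `κ`, exponent `α` and constant
`L`, there is a constant `c` depending only on `B, k, p, α, L, κ` such that, for the
indicator-form projection `Π_{C*}(x) = Σ_j c*_j·𝟙{ζ_j(x) > 0}` and every coordinate `a`,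
`E|[Π_{C*}(μ̂)]_a − [Π_{C*}(μ)]_a| ≤ c·( max_j ‖𝟙{ζ_j(μ̂) > 0} − 𝟙{ζ_j(μ) > 0}‖_∞ ·
Σ_{a'} E|μ̂_{a'} − μ_{a'}| + Σ_{a'} ‖μ̂_{a'} − μ_{a'}‖_∞^α )`. -/
theorem stmt_11 (B : ℝ) (hB : 0 < B) (k p : ℕ) (hk : 0 < k) (α L κ : ℝ)
    (hα : 0 < α) (hL : 0 < L) (hκ : 0 < κ) :
    ∃ c : ℝ, 0 ≤ c ∧
      ∀ (Ω : Type) (m0 : MeasurableSpace Ω) (P : Measure Ω), IsProbabilityMeasure P →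
      ∀ μv μh : Ω → EuclideanSpace ℝ (Fin p),
        (∀ a, Measurable fun ω => μv ω a) → (∀ a, Measurable fun ω => μh ω a) →
        (∀ a, ∀ᵐ ω ∂P, |μv ω a| ≤ B) → (∀ a, ∀ᵐ ω ∂P, |μh ω a| ≤ B) →
      ∀ Cs : Fin k → EuclideanSpace ℝ (Fin p), (∀ j a, |Cs j a| ≤ B) →
      (∀ t : ℝ, 0 ≤ t → t ≤ κ →
        P {ω | μv ω ∈ marginSet Cs t} ≤ ENNReal.ofReal (L * t ^ α)) →
      ∀ a : Fin p,
        ∫ ω, |(∑ j, (if 0 < zeta Cs j (μh ω) then (1 : ℝ) else 0) * Cs j a) -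
              (∑ j, (if 0 < zeta Cs j (μv ω) then (1 : ℝ) else 0) * Cs j a)| ∂P ≤
          c * ((⨆ j, linf P fun ω =>
                  (if 0 < zeta Cs j (μh ω) then (1 : ℝ) else 0) -
                    (if 0 < zeta Cs j (μv ω) then (1 : ℝ) else 0)) *
                (∑ a' : Fin p, ∫ ω, |μh ω a' - μv ω a'| ∂P) +
              ∑ a' : Fin p, (linf P fun ω => μh ω a' - μv ω a') ^ α) :=
  stmt_11_general B hB k p α L κ hα hL hκ
end

section
/- In the margin condition setting (see context), let d = d(μ;C*) and d̂ = d(μ̂;C*) be the nearest-center indices of μ and μ̂ under C*. Then there exists a constant c depending only on B, k, p, α and L such that 0 ≤ E[‖μ − c*_{d̂}‖₂² − ‖μ − c*_d‖₂²] ≤ c·( max_{a} ‖μ̂_a − μ_a‖_∞^{α+1} + κ^{-1}·max_{a} ( ‖μ̂_a − μ_a‖_∞ · E|μ̂_a − μ_a| ) ); that is, the expected excess squared distance incurred by selecting the nearest center according to μ̂ rather than μ is second order in the estimation error. -/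
open MeasureTheory

/-!
Write `x = μ`, `y = μ̂` and let `R` bound the distances from `x` to the centers. The excess
`‖x - c_{d(y)}‖² - ‖x - c_{d(x)}‖²` is nonnegative and, by the triangle inequality, at most
`4 R ‖y - x‖`. Take `r = √p max_a ‖μ̂_a - μ_a‖_∞ ≥ ‖y - x‖` and `t = min κ (2 r)`.
If `x` lies outside the margin set `N(t)` and `2 ‖y - x‖ ≤ t`, the nearest center does not
change. So either `x ∈ N(t)`, which costs `4 R r · P(N(t)) ≤ 4 R r L t^α`, of order `r^(α+1)`;
or `‖y - x‖ > κ / 2`, where `4 R ‖y - x‖ ≤ (8 R / κ) ‖y - x‖²` and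
`‖y - x‖² ≤ ∑_a ‖μ̂_a - μ_a‖_∞ |μ̂_a - μ_a|`.
-/

open Set

namespace Real

theorem rpow_iSup_le_iSup_rpow {ι : Type*} [Finite ι] {f : ι → ℝ} {s : ℝ} (hs : 0 < s) :
    (⨆ i, f i) ^ s ≤ ⨆ i, f i ^ s := by
  cases isEmpty_or_nonempty ι
  · simp [zero_rpow hs.ne']
  obtain ⟨i, hi⟩ : ∃ i, f i = ⨆ i, f i := exists_eq_ciSup_of_finite
  rw [← hi]
  exact le_ciSup (f := fun i => f i ^ s) (finite_range _).bddAbove i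

theorem mul_min_rpow_le {ε κ c α : ℝ} (hε : 0 ≤ ε) (hκ : 0 ≤ κ) (hc : 0 ≤ c) (hα : 0 ≤ α) :
    ε * min κ (c * ε) ^ α ≤ c ^ α * ε ^ (α + 1) :=
  calc ε * min κ (c * ε) ^ α ≤ ε * (c * ε) ^ α := by gcongr; exact min_le_right _ _
    _ = c ^ α * ε ^ (α + 1) := by
        rw [mul_rpow hc hε, rpow_add' hε (by positivity), rpow_one]
        ring

end Real

namespace EuclideanSpace

theorem norm_le_sqrt_card_mul {ι : Type*} [Fintype ι] {x : EuclideanSpace ℝ ι} {t : ℝ}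
    (ht : 0 ≤ t) (hx : ∀ i, |x i| ≤ t) : ‖x‖ ≤ √(Fintype.card ι) * t := by
  rw [← Real.sqrt_sq (norm_nonneg x), ← Real.sqrt_sq ht, ← Real.sqrt_mul (Nat.cast_nonneg _),
    EuclideanSpace.real_norm_sq_eq]
  gcongr
  calc ∑ i, x i ^ 2 ≤ ∑ _i : ι, t ^ 2 :=
        Finset.sum_le_sum fun i _ => sq_le_sq' (abs_le.1 (hx i)).1 (abs_le.1 (hx i)).2
    _ = Fintype.card ι * t ^ 2 := by simp

theorem norm_sq_le_sum_mul_abs {ι : Type*} [Fintype ι] {x : EuclideanSpace ℝ ι} {t : ι → ℝ}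
    (hx : ∀ i, |x i| ≤ t i) : ‖x‖ ^ 2 ≤ ∑ i, t i * |x i| := by
  rw [EuclideanSpace.real_norm_sq_eq]
  gcongr with i
  rw [← sq_abs, sq]
  exact mul_le_mul_of_nonneg_right (hx i) (abs_nonneg _)

end EuclideanSpace

section Codebook

variable {p k : ℕ} (hk : 0 < k) (Cs : Fin k → EuclideanSpace ℝ (Fin p))

def voronoiCell (j : Fin k) : Set (EuclideanSpace ℝ (Fin p)) :=
  {x | ∀ i, ‖x - Cs j‖ ≤ ‖x - Cs i‖}

theorem measurableSet_voronoiCell (j : Fin k) : MeasurableSet (voronoiCell Cs j) := by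
  simp only [voronoiCell, ofPred_forall]
  exact .iInter fun i => measurableSet_le (by fun_prop) (by fun_prop)

theorem nearestIdx_mem_voronoiCell (x : EuclideanSpace ℝ (Fin p)) :
    x ∈ voronoiCell Cs (nearestIdx hk Cs x) := by
  have h : nearestIdx hk Cs x ∈ Finset.univ.filter fun j => ∀ m, ‖x - Cs j‖ ≤ ‖x - Cs m‖ :=
    Finset.min'_mem _ _
  exact (Finset.mem_filter.1 h).2

theorem norm_sub_nearestIdx_le (x : EuclideanSpace ℝ (Fin p)) (i : Fin k) :
    ‖x - Cs (nearestIdx hk Cs x)‖ ≤ ‖x - Cs i‖ :=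
  nearestIdx_mem_voronoiCell hk Cs x i

theorem nearestIdx_eq_of_forall_lt {x : EuclideanSpace ℝ (Fin p)} {i : Fin k}
    (h : ∀ m, m ≠ i → ‖x - Cs i‖ < ‖x - Cs m‖) : nearestIdx hk Cs x = i := by
  by_contra hne
  exact (norm_sub_nearestIdx_le hk Cs x i).not_gt (h _ hne)

theorem measurable_nearestIdx_s12 : Measurable (nearestIdx hk Cs) := by
  refine measurable_of_Ioi fun j => ?_
  have : nearestIdx hk Cs ⁻¹' Ioi j = ⋂ i, ⋂ (_ : i ≤ j), (voronoiCell Cs i)ᶜ := by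
    ext x
    simp only [nearestIdx, mem_preimage, mem_Ioi, Finset.lt_min'_iff, Finset.mem_filter,
      Finset.mem_univ, true_and, mem_iInter, mem_compl_iff]
    exact forall_congr' fun i => by rw [imp_not_comm, not_le]; rfl
  rw [this]
  exact .iInter fun i => .iInter fun _ => (measurableSet_voronoiCell Cs i).compl

theorem measurableSet_marginSet (t : ℝ) : MeasurableSet (marginSet Cs t) := by
  have : marginSet Cs t = ⋃ j, voronoiCell Cs j ∩ {x | |zeta Cs j x| ≤ t} := by
    ext x; simp [marginSet, voronoiCell]
  rw [this]
  refine .iUnion fun j => (measurableSet_voronoiCell Cs j).inter (measurableSet_le ?_ (by fun_prop))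
  exact ((Measurable.iInf fun i => by fun_prop).sub (by fun_prop)).abs

theorem lt_norm_sub_sub_of_notMem_marginSet {x : EuclideanSpace ℝ (Fin p)} {t : ℝ} {i m : Fin k}
    (hi : x ∈ voronoiCell Cs i) (hx : x ∉ marginSet Cs t) (hm : m ≠ i) :
    t < ‖x - Cs m‖ - ‖x - Cs i‖ := by
  have : Nonempty {j : Fin k // j ≠ i} := ⟨⟨m, hm⟩⟩
  have hz_nonneg : 0 ≤ zeta Cs i x := sub_nonneg.2 (le_ciInf fun j => hi j.1)
  have hz : t < zeta Cs i x := by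
    by_contra! h
    exact hx ⟨i, hi, (abs_of_nonneg hz_nonneg).le.trans h⟩
  have hinf : (⨅ j : {j : Fin k // j ≠ i}, ‖x - Cs j.1‖) ≤ ‖x - Cs m‖ :=
    ciInf_le (finite_range _).bddBelow (⟨m, hm⟩ : {j : Fin k // j ≠ i})
  exact hz.trans_le (sub_le_sub_right hinf _)

theorem nearestIdx_eq_of_notMem_marginSet {x y : EuclideanSpace ℝ (Fin p)} {t : ℝ}
    (hx : x ∉ marginSet Cs t) (hxy : 2 * ‖y - x‖ ≤ t) :
    nearestIdx hk Cs y = nearestIdx hk Cs x := by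
  refine nearestIdx_eq_of_forall_lt hk Cs fun m hm => ?_
  have hgap := lt_norm_sub_sub_of_notMem_marginSet Cs (nearestIdx_mem_voronoiCell hk Cs x) hx hm
  have h₁ := norm_sub_le_norm_sub_add_norm_sub y x (Cs (nearestIdx hk Cs x))
  have h₂ := norm_sub_le_norm_sub_add_norm_sub x y (Cs m)
  rw [norm_sub_rev x y] at h₂
  linarith

noncomputable def excessLoss (x y : EuclideanSpace ℝ (Fin p)) : ℝ :=
  ‖x - Cs (nearestIdx hk Cs y)‖ ^ 2 - ‖x - Cs (nearestIdx hk Cs x)‖ ^ 2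

theorem excessLoss_nonneg (x y : EuclideanSpace ℝ (Fin p)) : 0 ≤ excessLoss hk Cs x y :=
  sub_nonneg.2 (pow_le_pow_left₀ (norm_nonneg _) (norm_sub_nearestIdx_le hk Cs x _) 2)

theorem excessLoss_le_mul_norm {x y : EuclideanSpace ℝ (Fin p)} {R : ℝ}
    (hR : ∀ j, ‖x - Cs j‖ ≤ R) : excessLoss hk Cs x y ≤ 4 * R * ‖y - x‖ := by
  set a := ‖x - Cs (nearestIdx hk Cs y)‖
  set b := ‖x - Cs (nearestIdx hk Cs x)‖
  have hba : b ≤ a := norm_sub_nearestIdx_le hk Cs x _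
  have haR : a ≤ R := hR _
  have hb₀ : 0 ≤ b := norm_nonneg _
  have hab : a - b ≤ 2 * ‖y - x‖ := by
    have h₁ := norm_sub_le_norm_sub_add_norm_sub x y (Cs (nearestIdx hk Cs y))
    have h₂ := norm_sub_nearestIdx_le hk Cs y (nearestIdx hk Cs x)
    have h₃ := norm_sub_le_norm_sub_add_norm_sub y x (Cs (nearestIdx hk Cs x))
    rw [norm_sub_rev x y] at h₁
    linarith
  calc excessLoss hk Cs x y = (a + b) * (a - b) := by unfold excessLoss; ring
    _ ≤ (2 * R) * (2 * ‖y - x‖) :=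
        mul_le_mul (by linarith) hab (by linarith) (by linarith)
    _ = 4 * R * ‖y - x‖ := by ring

theorem excessLoss_le_indicator_add {x y : EuclideanSpace ℝ (Fin p)} {R r κ : ℝ} (hκ : 0 < κ)
    (hR : ∀ j, ‖x - Cs j‖ ≤ R) (hr : ‖y - x‖ ≤ r) :
    excessLoss hk Cs x y ≤
      (marginSet Cs (min κ (2 * r))).indicator (fun _ => 4 * R * r) x +
        8 * R / κ * ‖y - x‖ ^ 2 := by
  have hR₀ : 0 ≤ R := (norm_nonneg _).trans (hR ⟨0, hk⟩)
  have hlin := excessLoss_le_mul_norm hk Cs (y := y) hR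
  by_cases hx : x ∈ marginSet Cs (min κ (2 * r))
  · rw [indicator_of_mem hx]
    have : 4 * R * ‖y - x‖ ≤ 4 * R * r := by gcongr
    have : 0 ≤ 8 * R / κ * ‖y - x‖ ^ 2 := by positivity
    linarith
  rw [indicator_of_notMem hx, zero_add]
  by_cases hnear : 2 * ‖y - x‖ ≤ min κ (2 * r)
  · rw [excessLoss, nearestIdx_eq_of_notMem_marginSet hk Cs hx hnear, sub_self]
    positivity
  have hκ_lt : κ < 2 * ‖y - x‖ := by
    rcases min_lt_iff.1 (not_le.1 hnear) with h | h
    · exact h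
    · linarith
  calc excessLoss hk Cs x y ≤ 4 * R * ‖y - x‖ := hlin
    _ ≤ 4 * R * ‖y - x‖ * (2 * ‖y - x‖ / κ) :=
        le_mul_of_one_le_right (by positivity) ((one_le_div hκ).2 hκ_lt.le)
    _ = 8 * R / κ * ‖y - x‖ ^ 2 := by ring

end Codebook

section Integral

variable {p k : ℕ} (hk : 0 < k) (Cs : Fin k → EuclideanSpace ℝ (Fin p))
  {Ω : Type*} {m : MeasurableSpace Ω} {P : Measure Ω}

theorem integral_excessLoss_le [IsProbabilityMeasure P] {X Y : Ω → EuclideanSpace ℝ (Fin p)}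
    (hX : Measurable X) (hY : Measurable Y) {R r κ M : ℝ} (hκ : 0 < κ) (hM : 0 ≤ M)
    (hR : ∀ᵐ ω ∂P, ∀ j, ‖X ω - Cs j‖ ≤ R) (hr : ∀ᵐ ω ∂P, ‖Y ω - X ω‖ ≤ r)
    (hmargin : P (X ⁻¹' marginSet Cs (min κ (2 * r))) ≤ ENNReal.ofReal M) :
    ∫ ω, excessLoss hk Cs (X ω) (Y ω) ∂P ≤
      4 * R * r * M + 8 * R / κ * ∫ ω, ‖Y ω - X ω‖ ^ 2 ∂P := by
  obtain ⟨ω₀, hRω₀, hrω₀⟩ := (hR.and hr).exists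
  have hR₀ : 0 ≤ R := (norm_nonneg _).trans (hRω₀ ⟨0, hk⟩)
  have hr₀ : 0 ≤ r := (norm_nonneg _).trans hrω₀
  set A := X ⁻¹' marginSet Cs (min κ (2 * r))
  have hA : MeasurableSet A := hX (measurableSet_marginSet Cs _)
  have hnY := (measurable_nearestIdx_s12 hk Cs).comp hY
  have hnX := (measurable_nearestIdx_s12 hk Cs).comp hX
  have hsq_int : Integrable (fun ω => ‖Y ω - X ω‖ ^ 2) P := by
    refine .of_bound (by fun_prop) (r ^ 2) ?_
    filter_upwards [hr] with ω hω
    rw [norm_pow, norm_norm]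
    gcongr
  have hexcess_int : Integrable (fun ω => excessLoss hk Cs (X ω) (Y ω)) P := by
    refine .of_bound ?_ (4 * R * r) ?_
    · exact ((hX.sub (measurable_from_top.comp hnY)).norm.pow_const 2).sub
        ((hX.sub (measurable_from_top.comp hnX)).norm.pow_const 2) |>.aestronglyMeasurable
    filter_upwards [hR, hr] with ω hRω hrω
    rw [Real.norm_of_nonneg (excessLoss_nonneg hk Cs _ _)]
    exact (excessLoss_le_mul_norm hk Cs hRω).trans (by gcongr)
  calc ∫ ω, excessLoss hk Cs (X ω) (Y ω) ∂P
      ≤ ∫ ω, A.indicator (fun _ => 4 * R * r) ω + 8 * R / κ * ‖Y ω - X ω‖ ^ 2 ∂P := by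
        refine integral_mono_ae hexcess_int
          (((integrable_const _).indicator hA).add (hsq_int.const_mul _)) ?_
        filter_upwards [hR, hr] with ω hRω hrω
        exact excessLoss_le_indicator_add hk Cs hκ hRω hrω
    _ = P.real A * (4 * R * r) + 8 * R / κ * ∫ ω, ‖Y ω - X ω‖ ^ 2 ∂P := by
        rw [integral_add ((integrable_const _).indicator hA) (hsq_int.const_mul _),
          integral_indicator_const _ hA, integral_const_mul, smul_eq_mul]
    _ ≤ 4 * R * r * M + 8 * R / κ * ∫ ω, ‖Y ω - X ω‖ ^ 2 ∂P := by
        rw [mul_comm (P.real A)]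
        gcongr
        exact ENNReal.toReal_le_of_le_ofReal hM hmargin

theorem integral_excessLoss_le_of_abs_le [IsProbabilityMeasure P]
    {X Y : Ω → EuclideanSpace ℝ (Fin p)} (hX : Measurable X) (hY : Measurable Y) {B ε κ M : ℝ}
    (hB : 0 ≤ B) (hε : 0 ≤ ε) (hκ : 0 < κ) (hM : 0 ≤ M) (hCs : ∀ j a, |Cs j a| ≤ B)
    (hXB : ∀ᵐ ω ∂P, ∀ a, |X ω a| ≤ B) (hXY : ∀ᵐ ω ∂P, ∀ a, |(Y ω - X ω) a| ≤ ε)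
    (hmargin : P (X ⁻¹' marginSet Cs (min κ (2 * √p * ε))) ≤ ENNReal.ofReal M) :
    ∫ ω, excessLoss hk Cs (X ω) (Y ω) ∂P ≤
      8 * B * p * ε * M + 16 * B * √p / κ * ∫ ω, ‖Y ω - X ω‖ ^ 2 ∂P := by
  have hR : ∀ᵐ ω ∂P, ∀ j, ‖X ω - Cs j‖ ≤ √p * (2 * B) := by
    filter_upwards [hXB] with ω hω j
    simpa using EuclideanSpace.norm_le_sqrt_card_mul (by positivity) fun a =>
      (abs_sub _ _).trans (by linarith [hω a, hCs j a] : |X ω a| + |Cs j a| ≤ 2 * B)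
  have hr : ∀ᵐ ω ∂P, ‖Y ω - X ω‖ ≤ √p * ε := by
    filter_upwards [hXY] with ω hω
    simpa using EuclideanSpace.norm_le_sqrt_card_mul hε hω
  have hsqrt : √p * √p = p := Real.mul_self_sqrt p.cast_nonneg
  calc ∫ ω, excessLoss hk Cs (X ω) (Y ω) ∂P
      ≤ 4 * (√p * (2 * B)) * (√p * ε) * M +
          8 * (√p * (2 * B)) / κ * ∫ ω, ‖Y ω - X ω‖ ^ 2 ∂P :=
        integral_excessLoss_le hk Cs hX hY hκ hM hR hr (by rwa [← mul_assoc])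
    _ = 8 * B * p * ε * M + 16 * B * √p / κ * ∫ ω, ‖Y ω - X ω‖ ^ 2 ∂P := by
        linear_combination (8 * B * ε * M) * hsqrt

theorem ae_abs_sub_le_linf {X Y : Ω → ℝ} {B : ℝ} (hX : ∀ᵐ ω ∂P, |X ω| ≤ B)
    (hY : ∀ᵐ ω ∂P, |Y ω| ≤ B) : ∀ᵐ ω ∂P, |Y ω - X ω| ≤ linf P fun ω => Y ω - X ω := by
  refine ae_le_essSup ⟨2 * B, Filter.eventually_map.2 ?_⟩
  filter_upwards [hX, hY] with ω hXω hYω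
  linarith [abs_sub (Y ω) (X ω)]

theorem integral_norm_sq_le_card_mul_iSup [IsFiniteMeasure P] {ι : Type*} [Fintype ι]
    {Z : Ω → EuclideanSpace ℝ ι} (hZ : Measurable Z) {δ : ι → ℝ}
    (hδ : ∀ᵐ ω ∂P, ∀ i, |Z ω i| ≤ δ i) :
    ∫ ω, ‖Z ω‖ ^ 2 ∂P ≤ Fintype.card ι * ⨆ i, δ i * ∫ ω, |Z ω i| ∂P := by
  have habs_int : ∀ i, Integrable (fun ω => |Z ω i|) P := fun i =>
    .of_bound (by fun_prop) (δ i) (by filter_upwards [hδ] with ω hω; simpa using hω i)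
  calc ∫ ω, ‖Z ω‖ ^ 2 ∂P ≤ ∫ ω, ∑ i, δ i * |Z ω i| ∂P := by
        refine integral_mono_of_nonneg (.of_forall fun ω => by positivity)
          (integrable_finsetSum _ fun i _ => (habs_int i).const_mul _) ?_
        filter_upwards [hδ] with ω hω
        exact EuclideanSpace.norm_sq_le_sum_mul_abs hω
    _ = ∑ i, δ i * ∫ ω, |Z ω i| ∂P := by
        rw [integral_finsetSum _ fun i _ => (habs_int i).const_mul _]
        simp only [integral_const_mul]
    _ ≤ Fintype.card ι * ⨆ i, δ i * ∫ ω, |Z ω i| ∂P := by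
        refine (Finset.sum_le_card_nsmul _ _ _ fun i _ => ?_).trans_eq
          (by rw [Finset.card_univ, nsmul_eq_mul])
        exact le_ciSup (f := fun i => δ i * ∫ ω, |Z ω i| ∂P) (finite_range _).bddAbove i

end Integral

/-- Under the margin condition, the expected excess squared distance from
selecting the nearest center according to `μ̂` instead of `μ` satisfies
`0 ≤ E[‖μ − c*_{d̂}‖₂² − ‖μ − c*_d‖₂²] ≤ c·( max_a ‖μ̂_a − μ_a‖_∞^{α+1} +
κ⁻¹·max_a (‖μ̂_a − μ_a‖_∞·E|μ̂_a − μ_a|) )` with `c` depending only on `B, k, p, α, L`. -/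
theorem stmt_12 (B : ℝ) (hB : 0 < B) (k p : ℕ) (hk : 0 < k) (α L : ℝ)
    (hα : 0 < α) (hL : 0 < L) :
    ∃ c : ℝ, 0 ≤ c ∧
      ∀ (Ω : Type) (m0 : MeasurableSpace Ω) (P : Measure Ω), IsProbabilityMeasure P →
      ∀ μv μh : Ω → EuclideanSpace ℝ (Fin p),
        (∀ a, Measurable fun ω => μv ω a) → (∀ a, Measurable fun ω => μh ω a) →
        (∀ a, ∀ᵐ ω ∂P, |μv ω a| ≤ B) → (∀ a, ∀ᵐ ω ∂P, |μh ω a| ≤ B) →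
      ∀ Cs : Fin k → EuclideanSpace ℝ (Fin p), (∀ j a, |Cs j a| ≤ B) →
      ∀ κ : ℝ, 0 < κ →
      (∀ t : ℝ, 0 ≤ t → t ≤ κ →
        P {ω | μv ω ∈ marginSet Cs t} ≤ ENNReal.ofReal (L * t ^ α)) →
      (0 ≤ ∫ ω, (‖μv ω - Cs (nearestIdx hk Cs (μh ω))‖ ^ 2 -
              ‖μv ω - Cs (nearestIdx hk Cs (μv ω))‖ ^ 2) ∂P) ∧
      ∫ ω, (‖μv ω - Cs (nearestIdx hk Cs (μh ω))‖ ^ 2 -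
              ‖μv ω - Cs (nearestIdx hk Cs (μv ω))‖ ^ 2) ∂P ≤
        c * ((⨆ a : Fin p, (linf P fun ω => μh ω a - μv ω a) ^ (α + 1)) +
          κ⁻¹ * ⨆ a : Fin p,
            (linf P fun ω => μh ω a - μv ω a) * ∫ ω, |μh ω a - μv ω a| ∂P) := by
  refine ⟨8 * B * p * L * (2 * √p) ^ α + 16 * B * √p * p, by positivity, ?_⟩
  intro Ω _ P _ μv μh hμv hμh hμvB hμhB Cs hCs κ hκ hmargin
  refine ⟨integral_nonneg fun ω => excessLoss_nonneg hk Cs _ _, ?_⟩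
  set δ : Fin p → ℝ := fun a => linf P fun ω => μh ω a - μv ω a
  set ε := ⨆ a, δ a
  set T₁ := ⨆ a, δ a ^ (α + 1)
  set T₂ := ⨆ a, δ a * ∫ ω, |μh ω a - μv ω a| ∂P
  have hμv_meas : Measurable μv := (WithLp.measurable_toLp 2 _).comp (measurable_pi_iff.2 hμv)
  have hμh_meas : Measurable μh := (WithLp.measurable_toLp 2 _).comp (measurable_pi_iff.2 hμh)
  have hδ_ae : ∀ᵐ ω ∂P, ∀ a, |(μh ω - μv ω) a| ≤ δ a :=
    ae_all_iff.2 fun a => ae_abs_sub_le_linf (hμvB a) (hμhB a)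
  obtain ⟨ω₀, hω₀⟩ := hδ_ae.exists
  have hδ₀ : ∀ a, 0 ≤ δ a := fun a => (abs_nonneg _).trans (hω₀ a)
  have hε₀ : 0 ≤ ε := Real.iSup_nonneg hδ₀
  have hδε : ∀ a, δ a ≤ ε := le_ciSup (finite_range δ).bddAbove
  have hmain := integral_excessLoss_le_of_abs_le hk Cs hμv_meas hμh_meas hB.le hε₀ hκ
    (by positivity) hCs (ae_all_iff.2 hμvB)
    (by filter_upwards [hδ_ae] with ω hω a using (hω a).trans (hδε a))
    (hmargin _ (by positivity) (min_le_left _ _))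
  have hsq := integral_norm_sq_le_card_mul_iSup (hμh_meas.sub hμv_meas) hδ_ae
  have hT₁ : 0 ≤ T₁ := Real.iSup_nonneg fun a => Real.rpow_nonneg (hδ₀ a) _
  have hT₂ : 0 ≤ T₂ :=
    Real.iSup_nonneg fun a => mul_nonneg (hδ₀ a) (integral_nonneg fun _ => abs_nonneg _)
  calc ∫ ω, excessLoss hk Cs (μv ω) (μh ω) ∂P
      ≤ 8 * B * p * L * (ε * min κ (2 * √p * ε) ^ α) +
          16 * B * √p / κ * ∫ ω, ‖μh ω - μv ω‖ ^ 2 ∂P := hmain.trans_eq (by ring)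
    _ ≤ 8 * B * p * L * ((2 * √p) ^ α * T₁) + 16 * B * √p / κ * (p * T₂) := by
        gcongr 8 * B * p * L * ?_ + 16 * B * √p / κ * ?_
        · refine (Real.mul_min_rpow_le hε₀ hκ.le (by positivity) hα.le).trans ?_
          gcongr
          exact Real.rpow_iSup_le_iSup_rpow (by positivity)
        · simpa using hsq
    _ ≤ (8 * B * p * L * (2 * √p) ^ α + 16 * B * √p * p) * (T₁ + κ⁻¹ * T₂) := by
        have : 0 ≤ 8 * B * p * L * (2 * √p) ^ α * (κ⁻¹ * T₂) + 16 * B * √p * p * T₁ := by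
          positivity
        rw [div_eq_mul_inv]
        linarith
end

section
/- Let (Ω,𝔉,P) be a probability space, B > 0, and μ, μ̂ : Ω → ℝ^p measurable with |μ_a| ≤ B and |μ̂_a| ≤ B almost surely for every coordinate a ∈ {1,…,p}. Then there exists a constant c depending only on B, k and p such that for every codebook C = (c_1,…,c_k) in ℝ^p with |c_{j,a}| ≤ B for all j and a: |E[f_C(μ̂)] − E[f_C(μ)]| ≤ c·max_{a} E|μ̂_a − μ_a|; consequently the supremum over all such codebooks of |E[f_C(μ̂)] − E[f_C(μ)]| is bounded by c·max_{a} E|μ̂_a − μ_a|. -/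
/-! On the cube `[-B, B]^p` every map `x ↦ ‖x - c‖²` with `c` in the cube is `4B`-Lipschitz for
the `ℓ¹` distance, since `(u - c)² - (v - c)² = (u - v)(u + v - 2c)` coordinatewise. A minimum of
finitely many such maps is again `4B`-Lipschitz, so taking expectations bounds the difference by
`4B ∑ₐ E|μ̂ₐ - μₐ| ≤ 4Bp · maxₐ E|μ̂ₐ - μₐ|`. -/

open MeasureTheory

lemma sq_sub_sq_sub_le {B u v c : ℝ} (hu : |u| ≤ B) (hv : |v| ≤ B) (hc : |c| ≤ B) :
    (u - c) ^ 2 - (v - c) ^ 2 ≤ 4 * B * |u - v| := by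
  have hsum : |u + v - 2 * c| ≤ 4 * B := by
    rw [abs_le] at hu hv hc ⊢
    constructor <;> linarith
  calc (u - c) ^ 2 - (v - c) ^ 2 = (u - v) * (u + v - 2 * c) := by ring
    _ ≤ |u - v| * |u + v - 2 * c| := by rw [← abs_mul]; exact le_abs_self _
    _ ≤ |u - v| * (4 * B) := by gcongr
    _ = 4 * B * |u - v| := mul_comm _ _

section Codebook

variable {p k : ℕ} {B : ℝ} {C : Fin k → EuclideanSpace ℝ (Fin p)}
  {x y : EuclideanSpace ℝ (Fin p)}

lemma norm_sub_sq_eq_sum (x c : EuclideanSpace ℝ (Fin p)) :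
    ‖x - c‖ ^ 2 = ∑ a, (x a - c a) ^ 2 := by
  simp [EuclideanSpace.real_norm_sq_eq]

lemma norm_sub_sq_sub_norm_sub_sq_le {c : EuclideanSpace ℝ (Fin p)} (hx : ∀ a, |x a| ≤ B)
    (hy : ∀ a, |y a| ≤ B) (hc : ∀ a, |c a| ≤ B) :
    ‖x - c‖ ^ 2 - ‖y - c‖ ^ 2 ≤ 4 * B * ∑ a, |x a - y a| := by
  rw [norm_sub_sq_eq_sum, norm_sub_sq_eq_sum, ← Finset.sum_sub_distrib, Finset.mul_sum]
  exact Finset.sum_le_sum fun a _ => sq_sub_sq_sub_le (hx a) (hy a) (hc a)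

lemma fC_le (C : Fin k → EuclideanSpace ℝ (Fin p)) (x : EuclideanSpace ℝ (Fin p)) (j : Fin k) :
    fC C x ≤ ‖x - C j‖ ^ 2 :=
  ciInf_le (Finite.bddBelow_range _) j

lemma fC_nonneg (C : Fin k → EuclideanSpace ℝ (Fin p)) (x : EuclideanSpace ℝ (Fin p)) :
    0 ≤ fC C x :=
  Real.iInf_nonneg fun _ => by positivity

lemma fC_sub_fC_le [NeZero k] (hC : ∀ j a, |C j a| ≤ B) (hx : ∀ a, |x a| ≤ B)
    (hy : ∀ a, |y a| ≤ B) : fC C x - fC C y ≤ 4 * B * ∑ a, |x a - y a| := by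
  obtain ⟨j, hj⟩ := exists_eq_ciInf_of_finite (f := fun j => ‖y - C j‖ ^ 2)
  have hxy := norm_sub_sq_sub_norm_sub_sq_le hx hy (hC j)
  have hxj := fC_le C x j
  have hyj : fC C y = ‖y - C j‖ ^ 2 := hj.symm
  linarith

lemma abs_fC_sub_fC_le [NeZero k] (hC : ∀ j a, |C j a| ≤ B) (hx : ∀ a, |x a| ≤ B)
    (hy : ∀ a, |y a| ≤ B) : |fC C x - fC C y| ≤ 4 * B * ∑ a, |x a - y a| := by
  refine abs_sub_le_iff.2 ⟨fC_sub_fC_le hC hx hy, ?_⟩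
  simpa only [abs_sub_comm] using fC_sub_fC_le hC hy hx

lemma abs_fC_le [NeZero k] (hC : ∀ j a, |C j a| ≤ B) (hx : ∀ a, |x a| ≤ B) :
    |fC C x| ≤ p * (2 * B) ^ 2 := by
  rw [abs_of_nonneg (fC_nonneg C x)]
  calc fC C x ≤ ∑ a, (x a - C 0 a) ^ 2 := norm_sub_sq_eq_sum x (C 0) ▸ fC_le C x 0
    _ ≤ ∑ _a : Fin p, (2 * B) ^ 2 := Finset.sum_le_sum fun a _ => by
        obtain ⟨hxl, hxu⟩ := abs_le.1 (hx a)
        obtain ⟨hcl, hcu⟩ := abs_le.1 (hC 0 a)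
        exact sq_le_sq' (by linarith) (by linarith)
    _ = p * (2 * B) ^ 2 := by simp

end Codebook

section Expectation

variable {Ω : Type*} [MeasurableSpace Ω] {P : Measure Ω} {p k : ℕ} {B : ℝ}
  {C : Fin k → EuclideanSpace ℝ (Fin p)} {f g : Ω → EuclideanSpace ℝ (Fin p)}

lemma abs_integral_sub_integral_le {u v w : Ω → ℝ} (hu : Integrable u P) (hv : Integrable v P)
    (hw : Integrable w P) (huvw : ∀ᵐ ω ∂P, |u ω - v ω| ≤ w ω) :
    |∫ ω, u ω ∂P - ∫ ω, v ω ∂P| ≤ ∫ ω, w ω ∂P := by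
  rw [← integral_sub hu hv]
  exact abs_integral_le_integral_abs.trans (integral_mono_ae (hu.sub hv).abs hw huvw)

lemma measurable_of_measurable_coord (hf : ∀ a, Measurable fun ω => f ω a) : Measurable f :=
  (WithLp.measurable_toLp 2 (Fin p → ℝ)).comp (measurable_pi_lambda _ hf)

lemma measurable_fC_comp (C : Fin k → EuclideanSpace ℝ (Fin p)) (hf : Measurable f) :
    Measurable fun ω => fC C (f ω) :=
  Measurable.iInf fun _ => ((hf.sub measurable_const).norm).pow_const 2

variable [IsFiniteMeasure P]

lemma integrable_fC_comp [NeZero k] (hC : ∀ j a, |C j a| ≤ B) (hf : Measurable f)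
    (hfB : ∀ᵐ ω ∂P, ∀ a, |f ω a| ≤ B) : Integrable (fun ω => fC C (f ω)) P :=
  .of_bound (measurable_fC_comp C hf).aestronglyMeasurable _ <|
    hfB.mono fun _ hω => abs_fC_le hC hω

lemma integrable_abs_coord_sub (hf : ∀ a, Measurable fun ω => f ω a)
    (hg : ∀ a, Measurable fun ω => g ω a) (hfB : ∀ a, ∀ᵐ ω ∂P, |f ω a| ≤ B)
    (hgB : ∀ a, ∀ᵐ ω ∂P, |g ω a| ≤ B) (a : Fin p) :
    Integrable (fun ω => |f ω a - g ω a|) P := by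
  refine .of_bound ((hf a).sub (hg a)).abs.aestronglyMeasurable (2 * B) ?_
  filter_upwards [hfB a, hgB a] with ω hfω hgω
  rw [Real.norm_eq_abs, abs_abs]
  linarith [abs_sub (f ω a) (g ω a)]

lemma abs_integral_fC_sub_le [NeZero k] (hC : ∀ j a, |C j a| ≤ B)
    (hf : ∀ a, Measurable fun ω => f ω a) (hg : ∀ a, Measurable fun ω => g ω a)
    (hfB : ∀ a, ∀ᵐ ω ∂P, |f ω a| ≤ B) (hgB : ∀ a, ∀ᵐ ω ∂P, |g ω a| ≤ B) :
    |∫ ω, fC C (f ω) ∂P - ∫ ω, fC C (g ω) ∂P| ≤ 4 * B * ∑ a, ∫ ω, |f ω a - g ω a| ∂P := by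
  have hfB' := ae_all_iff.2 hfB
  have hgB' := ae_all_iff.2 hgB
  have hcoord := integrable_abs_coord_sub hf hg hfB hgB
  rw [← integral_finsetSum _ fun a _ => hcoord a, ← integral_const_mul]
  refine abs_integral_sub_integral_le
    (integrable_fC_comp hC (measurable_of_measurable_coord hf) hfB')
    (integrable_fC_comp hC (measurable_of_measurable_coord hg) hgB')
    ((integrable_finsetSum _ fun a _ => hcoord a).const_mul _) ?_
  filter_upwards [hfB', hgB'] with ω hfω hgω
  exact abs_fC_sub_fC_le hC hfω hgω

end Expectation

lemma sum_le_card_mul_iSup {ι : Type*} [Fintype ι] (s : ι → ℝ) :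
    ∑ a, s a ≤ Fintype.card ι * ⨆ a, s a := by
  simpa using
    Finset.sum_le_card_nsmul Finset.univ s _ fun a _ => le_ciSup (Finite.bddAbove_range s) a

/-- There is a constant `c` depending only on `B, k, p` such that for
every codebook `C` with all center coordinates bounded by `B`,
`|E[f_C(μ̂)] − E[f_C(μ)]| ≤ c·max_a E|μ̂_a − μ_a|`; in particular, the supremum of the
left-hand side over all such codebooks obeys the same bound. -/
theorem stmt_14 (B : ℝ) (hB : 0 < B) (k p : ℕ) (hk : 0 < k) :
    ∃ c : ℝ, 0 ≤ c ∧
      ∀ (Ω : Type) (m0 : MeasurableSpace Ω) (P : Measure Ω), IsProbabilityMeasure P →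
      ∀ μv μh : Ω → EuclideanSpace ℝ (Fin p),
        (∀ a, Measurable fun ω => μv ω a) → (∀ a, Measurable fun ω => μh ω a) →
        (∀ a, ∀ᵐ ω ∂P, |μv ω a| ≤ B) → (∀ a, ∀ᵐ ω ∂P, |μh ω a| ≤ B) →
      ∀ C : Fin k → EuclideanSpace ℝ (Fin p), (∀ j a, |C j a| ≤ B) →
        |∫ ω, fC C (μh ω) ∂P - ∫ ω, fC C (μv ω) ∂P| ≤
          c * ⨆ a : Fin p, ∫ ω, |μh ω a - μv ω a| ∂P := by
  have : NeZero k := ⟨hk.ne'⟩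
  refine ⟨4 * B * p, by positivity, fun Ω _ P _ μv μh hv hh hvB hhB C hC => ?_⟩
  calc |∫ ω, fC C (μh ω) ∂P - ∫ ω, fC C (μv ω) ∂P|
      ≤ 4 * B * ∑ a, ∫ ω, |μh ω a - μv ω a| ∂P :=
        abs_integral_fC_sub_le hC hh hv hhB hvB
    _ ≤ 4 * B * (p * ⨆ a, ∫ ω, |μh ω a - μv ω a| ∂P) := by
        gcongr; simpa using sum_le_card_mul_iSup fun a : Fin p => ∫ ω, |μh ω a - μv ω a| ∂P
    _ = 4 * B * p * ⨆ a, ∫ ω, |μh ω a - μv ω a| ∂P := by ring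
end
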